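/- arXiv:2302.06231 — 7 statements merged into one kernel-verified Lean document; each statement's English description precedes it below -/
import Mathlib

section
/- Let $n = 2m$ with $m \geq 3$ odd, and let $G = D_n = \langle x, y \mid x^n = y^2 = 1, y^{-1}xy = x^{-1}\rangle$ act on $\mathbb{Z}^n$ with basis $e_1, \ldots, e_n$ by $x : e_i \mapsto e_{i+1}$ (indices mod $n$) and $y : e_i \leftrightarrow e_{n+1-i}$. Let $f_i = e_i - e_{i+1}$ for $1 \leq i \leq n-1$ and $I$ the span of $f_1,\ldots,f_{n-1}$ (the augmentation ideal sublattice). Let $P = \mathbb{Z}[G/\langle x^m \rangle] \oplus \mathbb{Z}[G/\langle xy \rangle]$ with standard permutation basis $\alpha_1,\ldots,\alpha_m,\beta_1,\ldots,\beta_m,\gamma_1,\ldots,\gamma_n$, and define the $G$-homomorphism $\varphi : P \to I$ by $\varphi(\alpha_i) = f_i + f_{m+i}$, $\varphi(\beta_i) = -(f_i + f_{m+i})$ for $1 \leq i \leq m$, and $\varphi(\gamma_j) = x^{j-1}(\sum_{l=1}^{m-1} f_l + f_{m+1})$ for $1 \leq j \leq n$ (indices of $f$ taken mod $n$ with $f_n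 = -\sum_{i=1}^{n-1} f_i$). Then $\varphi$ is a surjective morphism of $\mathbb{Z}[G]$-modules. -/
lemma aux_tel {N : ℕ} (f : ZMod N → ZMod N → ℤ)
    (hf : ∀ i, f i = Pi.single i 1 - Pi.single (i + 1) 1) (a : ZMod N) :
    ∀ k : ℕ, ∑ l ∈ Finset.range k, f (a + (l : ZMod N)) =
      Pi.single a 1 - Pi.single (a + (k : ZMod N)) 1 := by
  intro k
  induction k with
  | zero => simp
  | succ k ih =>
    rw [Finset.sum_range_succ, ih, hf]
    push_cast
    have e1 : a + (k + 1 : ZMod N) = a + k + 1 := by ring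
    rw [e1]
    abel

lemma aux_rtel {N : ℕ} (f : ZMod N → ZMod N → ℤ)
    (hf : ∀ i, f i = Pi.single i 1 - Pi.single (i + 1) 1) (a : ZMod N) :
    ∀ k : ℕ, ∑ l ∈ Finset.range k, f (a - (l : ZMod N)) =
      Pi.single (a + 1 - (k : ZMod N)) 1 - Pi.single (a + 1) 1 := by
  intro k
  induction k with
  | zero => simp
  | succ k ih =>
    rw [Finset.sum_range_succ, ih, hf]
    push_cast
    have e1 : a - (k : ZMod N) + 1 = a + 1 - k := by ring
    have e2 : a + 1 - ((k : ZMod N) + 1) = a - k := by ring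
    rw [e1, e2]
    abel

/-- For `n = 2m`, `m ≥ 3` odd, `G = D_n`, the `G`-homomorphism
`φ : ℤ[G/⟨x^m⟩] ⊕ ℤ[G/⟨xy⟩] → I_{G/H}` given by `φ(α_i) = f_i + f_{m+i}`,
`φ(β_i) = -(f_i + f_{m+i})`, `φ(γ_j) = x^{j-1}(f_1 + ⋯ + f_{m-1} + f_{m+1})`
is a surjective morphism of `ℤ[G]`-modules onto the augmentation sublattice.
(The basis of `ℤ[G/H]` is indexed by `ZMod (2m)`, with `x : e_i ↦ e_{i+1}`,
`y : e_i ↦ e_{1-i}`; `f_i = e_i - e_{i+1}`; `α, β` are indexed by `ZMod m` and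
`γ` by `ZMod (2m)`.) -/
theorem stmt_3 (m : ℕ) (hm : 3 ≤ m) (hodd : Odd m)
    (ρP : Representation ℤ (DihedralGroup (2 * m))
      ((ZMod m ⊕ ZMod m ⊕ ZMod (2 * m)) → ℤ))
    (ρE : Representation ℤ (DihedralGroup (2 * m)) (ZMod (2 * m) → ℤ))
    (f : ZMod (2 * m) → (ZMod (2 * m) → ℤ))
    (hf : ∀ i, f i = Pi.single i 1 - Pi.single (i + 1) 1)
    (hEx : ∀ i, ρE (DihedralGroup.r 1) (Pi.single i 1) = Pi.single (i + 1) 1)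
    (hEy : ∀ i, ρE (DihedralGroup.sr 0) (Pi.single i 1) = Pi.single (1 - i) 1)
    (hPxa : ∀ i : ZMod m, ρP (DihedralGroup.r 1) (Pi.single (Sum.inl i) 1) =
      Pi.single (Sum.inl (i + 1)) 1)
    (hPxb : ∀ i : ZMod m, ρP (DihedralGroup.r 1) (Pi.single (Sum.inr (Sum.inl i)) 1) =
      Pi.single (Sum.inr (Sum.inl (i + 1))) 1)
    (hPxc : ∀ j : ZMod (2 * m), ρP (DihedralGroup.r 1) (Pi.single (Sum.inr (Sum.inr j)) 1) =
      Pi.single (Sum.inr (Sum.inr (j + 1))) 1)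
    (hPya : ∀ i : ZMod m, ρP (DihedralGroup.sr 0) (Pi.single (Sum.inl i) 1) =
      Pi.single (Sum.inr (Sum.inl (-i))) 1)
    (hPyb : ∀ i : ZMod m, ρP (DihedralGroup.sr 0) (Pi.single (Sum.inr (Sum.inl i)) 1) =
      Pi.single (Sum.inl (-i)) 1)
    (hPyc : ∀ j : ZMod (2 * m), ρP (DihedralGroup.sr 0) (Pi.single (Sum.inr (Sum.inr j)) 1) =
      Pi.single (Sum.inr (Sum.inr (1 - j))) 1)
    (φ : ((ZMod m ⊕ ZMod m ⊕ ZMod (2 * m)) → ℤ) →ₗ[ℤ] (ZMod (2 * m) → ℤ))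
    (hφa : ∀ i : ZMod m, φ (Pi.single (Sum.inl i) 1) =
      f (i.val : ZMod (2 * m)) + f ((m : ZMod (2 * m)) + (i.val : ZMod (2 * m))))
    (hφb : ∀ i : ZMod m, φ (Pi.single (Sum.inr (Sum.inl i)) 1) =
      -(f (i.val : ZMod (2 * m)) + f ((m : ZMod (2 * m)) + (i.val : ZMod (2 * m)))))
    (hφc : ∀ j : ZMod (2 * m), φ (Pi.single (Sum.inr (Sum.inr j)) 1) =
      (∑ l ∈ Finset.range (m - 1), f (j + (l : ZMod (2 * m)))) + f (j + (m : ZMod (2 * m)))) :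
    (∀ (g : DihedralGroup (2 * m)) (w : (ZMod m ⊕ ZMod m ⊕ ZMod (2 * m)) → ℤ),
        φ (ρP g w) = ρE g (φ w)) ∧
    LinearMap.range φ = Submodule.span ℤ (Set.range f) := by
  haveI : NeZero m := ⟨by omega⟩
  haveI : NeZero (2*m) := ⟨by omega⟩
  -- basic index facts
  have hm0 : ((2*m : ℕ) : ZMod (2*m)) = 0 := ZMod.natCast_self _
  have hmm : (m : ZMod (2*m)) + (m : ZMod (2*m)) = 0 := by
    rw [← Nat.cast_add, (by ring : m + m = 2*m), hm0]
  have hnegm : -(m : ZMod (2*m)) = (m : ZMod (2*m)) := by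
    rw [neg_eq_iff_add_eq_zero]; exact hmm
  -- action of generators on the f vectors
  have hfx : ∀ j, ρE (DihedralGroup.r 1) (f j) = f (j + 1) := by
    intro j; rw [hf, map_sub, hEx, hEx, hf (j+1)]
  have hfy : ∀ j, ρE (DihedralGroup.sr 0) (f j) = -f (-j) := by
    intro j
    rw [hf, map_sub, hEy, hEy, hf (-j)]
    have e1 : 1 - (j + 1) = -j := by ring
    have e2 : -j + 1 = 1 - j := by ring
    rw [e1, e2]
    abel
  -- periodicity of F j := f j + f (m + j)
  have hFper : ∀ j : ZMod (2*m),
      f (j + (m : ZMod (2*m))) + f ((m : ZMod (2*m)) + (j + (m : ZMod (2*m)))) =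
      f j + f ((m : ZMod (2*m)) + j) := by
    intro j
    have e1 : (m : ZMod (2*m)) + (j + m) = j := by
      rw [show (m : ZMod (2*m)) + (j + m) = j + (m + m) from by ring, hmm, add_zero]
    rw [e1, add_comm j (m : ZMod (2*m))]
    abel
  have hFperN : ∀ (k : ℕ) (j : ZMod (2*m)),
      f (j + (m : ZMod (2*m)) * k) + f ((m : ZMod (2*m)) + (j + (m : ZMod (2*m)) * k)) =
      f j + f ((m : ZMod (2*m)) + j) := by
    intro k
    induction k with
    | zero => intro j; push_cast; rw [mul_zero, add_zero]
    | succ k ih =>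
      intro j
      have e1 : j + (m : ZMod (2*m)) * ((k:ℕ)+1) = (j + (m : ZMod (2*m)) * k) + m := by
        push_cast; ring
      push_cast
      push_cast at e1
      rw [e1, hFper (j + (m : ZMod (2*m)) * k), ih j]
  have hvalcast : ∀ a : ℕ,
      f ((a : ZMod (2*m))) + f ((m : ZMod (2*m)) + (a : ZMod (2*m))) =
      f (((a : ZMod m)).val : ZMod (2*m)) +
        f ((m : ZMod (2*m)) + (((a : ZMod m)).val : ZMod (2*m))) := by
    intro a
    conv_lhs => rw [show a = a % m + m * (a / m) from (Nat.mod_add_div a m).symm]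
    push_cast
    rw [hFperN (a / m) ((a % m : ℕ) : ZMod (2*m)), ZMod.val_natCast]
  have hsucc : ∀ i : ZMod m,
      f ((((i+1 : ZMod m)).val : ZMod (2*m))) +
        f ((m : ZMod (2*m)) + (((i+1 : ZMod m)).val : ZMod (2*m))) =
      f ((i.val : ZMod (2*m)) + 1) + f ((m : ZMod (2*m)) + ((i.val : ZMod (2*m)) + 1)) := by
    intro i
    have h1 : ((i.val + 1 : ℕ) : ZMod m) = i + 1 := by
      push_cast [ZMod.natCast_val, ZMod.cast_id]
      rfl
    have h2 := hvalcast (i.val + 1)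
    rw [h1] at h2
    rw [← h2]
    push_cast
    ring_nf
  have hle : ∀ i : ZMod m, i.val ≤ m := fun i => le_of_lt (ZMod.val_lt i)
  have hneg : ∀ i : ZMod m,
      f ((((-i : ZMod m)).val : ZMod (2*m))) +
        f ((m : ZMod (2*m)) + (((-i : ZMod m)).val : ZMod (2*m))) =
      f (-(i.val : ZMod (2*m))) + f ((m : ZMod (2*m)) + -(i.val : ZMod (2*m))) := by
    intro i
    have h1 : ((m - i.val : ℕ) : ZMod m) = -i := by
      push_cast [Nat.cast_sub (hle i), ZMod.natCast_val, ZMod.cast_id, ZMod.natCast_self]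
      ring
    have h2 := hvalcast (m - i.val)
    rw [h1] at h2
    rw [← h2, Nat.cast_sub (hle i)]
    have e1 : (m : ZMod (2*m)) - (i.val : ZMod (2*m)) = -(i.val : ZMod (2*m)) + m := by ring
    rw [e1, hFper (-(i.val : ZMod (2*m)))]
  -- equivariance for generator x = r 1
  have hx : ∀ w, φ (ρP (DihedralGroup.r 1) w) = ρE (DihedralGroup.r 1) (φ w) := by
    have h : φ ∘ₗ (ρP (DihedralGroup.r 1) : _ →ₗ[ℤ] _) =
        (ρE (DihedralGroup.r 1) : _ →ₗ[ℤ] _) ∘ₗ φ := by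
      apply Module.Basis.ext (Pi.basisFun ℤ (ZMod m ⊕ ZMod m ⊕ ZMod (2*m)))
      intro k
      rw [Pi.basisFun_apply]
      rcases k with i | i | j
      · simp only [LinearMap.comp_apply]
        rw [hPxa, hφa, hφa, map_add, hfx, hfx, hsucc i,
          show (m : ZMod (2*m)) + ((i.val : ZMod (2*m)) + 1) = ↑m + ↑i.val + 1 from by ring]
      · simp only [LinearMap.comp_apply]
        rw [hPxb, hφb, hφb, map_neg, map_add, hfx, hfx, hsucc i,
          show (m : ZMod (2*m)) + ((i.val : ZMod (2*m)) + 1) = ↑m + ↑i.val + 1 from by ring]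
      · simp only [LinearMap.comp_apply]
        rw [hPxc, hφc, hφc, map_add, map_sum]
        simp only [hfx]
        congr 1
        · exact Finset.sum_congr rfl fun l _ => by
            rw [show j + 1 + (l : ZMod (2*m)) = j + ↑l + 1 from by ring]
        · rw [show j + 1 + (m : ZMod (2*m)) = j + ↑m + 1 from by ring]
    intro w
    exact LinearMap.congr_fun h w
  -- equivariance for generator y = sr 0
  have hy : ∀ w, φ (ρP (DihedralGroup.sr 0) w) = ρE (DihedralGroup.sr 0) (φ w) := by
    have h : φ ∘ₗ (ρP (DihedralGroup.sr 0) : _ →ₗ[ℤ] _) =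
        (ρE (DihedralGroup.sr 0) : _ →ₗ[ℤ] _) ∘ₗ φ := by
      apply Module.Basis.ext (Pi.basisFun ℤ (ZMod m ⊕ ZMod m ⊕ ZMod (2*m)))
      intro k
      rw [Pi.basisFun_apply]
      rcases k with i | i | j
      · simp only [LinearMap.comp_apply]
        rw [hPya, hφb, hφa, map_add, hfy, hfy, hneg i,
          show -((m : ZMod (2*m)) + (i.val : ZMod (2*m))) = ↑m + -(i.val : ZMod (2*m))
            from by rw [neg_add, hnegm]]
        abel
      · simp only [LinearMap.comp_apply]
        rw [hPyb, hφa, hφb, map_neg, map_add, hfy, hfy, hneg i,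
          show -((m : ZMod (2*m)) + (i.val : ZMod (2*m))) = ↑m + -(i.val : ZMod (2*m))
            from by rw [neg_add, hnegm]]
        abel
      · simp only [LinearMap.comp_apply]
        rw [hPyc, hφc, hφc, map_add, map_sum]
        simp only [hfy]
        have esum : ∑ l ∈ Finset.range (m-1), -f (-(j + (l : ZMod (2*m)))) =
            -∑ l ∈ Finset.range (m-1), f (-j - (l : ZMod (2*m))) := by
          rw [← Finset.sum_neg_distrib]
          exact Finset.sum_congr rfl fun l _ => by
            rw [show -(j + (l : ZMod (2*m))) = -j - ↑l from by ring]
        rw [esum, aux_tel f hf (1-j) (m-1), aux_rtel f hf (-j) (m-1),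
          hf (1 - j + (m : ZMod (2*m))), hf (-(j + (m : ZMod (2*m))))]
        have hc1 : ((m - 1 : ℕ) : ZMod (2*m)) = (m : ZMod (2*m)) - 1 := by
          rw [Nat.cast_sub (by omega : 1 ≤ m)]; norm_num
        rw [hc1]
        rw [show 1 - j + ((m : ZMod (2*m)) - 1) = -j + ↑m from by ring]
        rw [show -j + 1 - ((m : ZMod (2*m)) - 1) = (2 - j) - ↑m from by ring]
        rw [show (2 - j) - (m : ZMod (2*m)) = (2 - j) + ↑m from by
          rw [sub_eq_add_neg, hnegm]]
        rw [show -(j + (m : ZMod (2*m))) = -j + ↑m from by rw [neg_add, hnegm]]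
        rw [show -j + (m : ZMod (2*m)) + 1 = 1 - j + ↑m from by ring]
        rw [show 1 - j + (m : ZMod (2*m)) + 1 = (2 - j) + ↑m from by ring]
        rw [show -j + 1 = 1 - j from by ring]
        abel
    intro w
    exact LinearMap.congr_fun h w
  -- generate the whole group
  have hmul : ∀ g h : DihedralGroup (2*m), (∀ w, φ (ρP g w) = ρE g (φ w)) →
      (∀ w, φ (ρP h w) = ρE h (φ w)) → ∀ w, φ (ρP (g*h) w) = ρE (g*h) (φ w) := by
    intro g h hg hh w
    rw [map_mul, map_mul, Module.End.mul_apply, Module.End.mul_apply, hg, hh]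
  have hone : ∀ w, φ (ρP 1 w) = ρE 1 (φ w) := by
    intro w; rw [map_one, map_one]; rfl
  have hpow : ∀ k : ℕ, ∀ w, φ (ρP (DihedralGroup.r 1 ^ k) w) =
      ρE (DihedralGroup.r 1 ^ k) (φ w) := by
    intro k
    induction k with
    | zero => simpa using hone
    | succ k ih => rw [pow_succ]; exact hmul _ _ ih hx
  have hequiv : ∀ (g : DihedralGroup (2 * m)) (w : (ZMod m ⊕ ZMod m ⊕ ZMod (2 * m)) → ℤ),
      φ (ρP g w) = ρE g (φ w) := by
    intro g w
    rcases g with i | i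
    · have hgi : DihedralGroup.r i = DihedralGroup.r 1 ^ (i.val) := by
        rw [DihedralGroup.r_one_pow, ZMod.natCast_val, ZMod.cast_id]
      rw [hgi]; exact hpow _ w
    · have hgi : DihedralGroup.sr i = DihedralGroup.sr 0 * DihedralGroup.r 1 ^ (i.val) := by
        rw [DihedralGroup.r_one_pow, ZMod.natCast_val, ZMod.cast_id,
          DihedralGroup.sr_mul_r, zero_add]
      rw [hgi]; exact hmul _ _ hy (hpow _) w
  -- Part 2: range φ = span of the f's
  set R := LinearMap.range φ with hR
  have hαR : ∀ i : ZMod m,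
      f ((i.val : ZMod (2*m))) + f ((m:ZMod (2*m)) + (i.val : ZMod (2*m))) ∈ R :=
    fun i => ⟨_, hφa i⟩
  have hγR : ∀ j : ZMod (2*m),
      (∑ l ∈ Finset.range (m-1), f (j + (l:ZMod (2*m)))) + f (j + (m:ZMod (2*m))) ∈ R :=
    fun j => ⟨_, hφc j⟩
  have hFR : ∀ a : ZMod (2*m), f a + f ((m:ZMod (2*m)) + a) ∈ R := by
    intro a
    have e : a = ((a.val : ℕ) : ZMod (2*m)) := by rw [ZMod.natCast_val, ZMod.cast_id]
    rw [e, hvalcast a.val]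
    exact hαR _
  have hhR : ∀ j : ZMod (2*m),
      (∑ l ∈ Finset.range (m-2), f (j + 1 + (l:ZMod (2*m)))) ∈ R := by
    intro j
    have esum : ∑ l ∈ Finset.range (m-2), f (j + ((l:ZMod (2*m))+1)) =
        ∑ l ∈ Finset.range (m-2), f (j + 1 + (l:ZMod (2*m))) :=
      Finset.sum_congr rfl fun l _ => by
        rw [show j + ((l:ZMod (2*m))+1) = j + 1 + ↑l from by ring]
    have hsplit : (∑ l ∈ Finset.range (m-1), f (j + (l:ZMod (2*m)))) + f (j + ↑m)
        = (f j + f ((m:ZMod (2*m)) + j)) +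
          ∑ l ∈ Finset.range (m-2), f (j + 1 + (l:ZMod (2*m))) := by
      rw [show m - 1 = (m-2)+1 from by omega, Finset.sum_range_succ']
      push_cast
      rw [esum, show j + (0:ZMod (2*m)) = j from by ring,
        show j + (m:ZMod (2*m)) = ↑m + j from by ring]
      abel
    have h2 := sub_mem (hγR j) (hFR j)
    rw [hsplit, add_sub_cancel_left] at h2
    exact h2
  have hdR : ∀ a : ZMod (2*m), f a - f (a + (m:ZMod (2*m)) - 2) ∈ R := by
    intro a
    have h1 := hhR (a - 1)
    have h2 := hhR a
    have e1 : (∑ l ∈ Finset.range (m-2), f (a - 1 + 1 + (l:ZMod (2*m))))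
        = f a + ∑ l ∈ Finset.range (m-3), f (a + 1 + (l:ZMod (2*m))) := by
      rw [show m - 2 = (m-3)+1 from by omega, Finset.sum_range_succ']
      push_cast
      have esum : ∑ l ∈ Finset.range (m-3), f (a - 1 + 1 + ((l:ZMod (2*m))+1)) =
          ∑ l ∈ Finset.range (m-3), f (a + 1 + (l:ZMod (2*m))) :=
        Finset.sum_congr rfl fun l _ => by
          rw [show a - 1 + 1 + ((l:ZMod (2*m))+1) = a + 1 + ↑l from by ring]
      rw [esum, show a - 1 + 1 + (0:ZMod (2*m)) = a from by ring]
      abel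
    have e2 : (∑ l ∈ Finset.range (m-2), f (a + 1 + (l:ZMod (2*m))))
        = (∑ l ∈ Finset.range (m-3), f (a + 1 + (l:ZMod (2*m)))) + f (a + ↑m - 2) := by
      rw [show m - 2 = (m-3)+1 from by omega, Finset.sum_range_succ]
      congr 1
      rw [show a + 1 + ((m-3 : ℕ) : ZMod (2*m)) = a + ↑m - 2 from by
        rw [Nat.cast_sub (by omega : 3 ≤ m)]; push_cast; ring]
    rw [e1] at h1
    rw [e2] at h2
    have h3 := sub_mem h1 h2
    rw [show (f a + ∑ l ∈ Finset.range (m-3), f (a + 1 + (l:ZMod (2*m)))) -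
        ((∑ l ∈ Finset.range (m-3), f (a + 1 + (l:ZMod (2*m)))) + f (a + ↑m - 2)) =
        f a - f (a + ↑m - 2) from by abel] at h3
    exact h3
  have hsR : ∀ a : ZMod (2*m), f a + f (a - 2) ∈ R := by
    intro a
    have h1 := sub_mem (hFR a) (hdR ((m:ZMod (2*m)) + a))
    rw [show (m:ZMod (2*m)) + a + ↑m - 2 = a - 2 + (↑m + ↑m) from by ring, hmm,
      add_zero] at h1
    rw [show f a + f ((m:ZMod (2*m)) + a) - (f (↑m + a) - f (a - 2)) = f a + f (a-2)
      from by abel] at h1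
    exact h1
  have h2R : ∀ a : ZMod (2*m), f a + f a ∈ R := by
    intro a
    have key : ∀ K : ℕ, f a + ((-1:ℤ)^K) • f (a - ((2*(K+1) : ℕ) : ZMod (2*m))) ∈ R := by
      intro K
      induction K with
      | zero => simpa using hsR a
      | succ K ih =>
        have hs' := R.smul_mem ((-1:ℤ)^K) (hsR (a - ((2*(K+1) : ℕ) : ZMod (2*m))))
        have h3 := sub_mem ih hs'
        rw [show f a + (-1:ℤ)^K • f (a - ((2*(K+1) : ℕ) : ZMod (2*m))) -
            (-1:ℤ)^K • (f (a - ((2*(K+1) : ℕ) : ZMod (2*m))) +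
              f (a - ((2*(K+1) : ℕ) : ZMod (2*m)) - 2)) =
            f a + (-1:ℤ)^(K+1) • f (a - ((2*(K+1) : ℕ) : ZMod (2*m)) - 2) from by
          rw [pow_succ]
          simp only [smul_add, mul_smul, neg_smul, one_smul, smul_neg]
          abel] at h3
        rw [show a - ((2*(K+1) : ℕ) : ZMod (2*m)) - 2 = a - ((2*(K+1+1) : ℕ) : ZMod (2*m))
          from by push_cast; ring] at h3
        exact h3
    have h4 := key (m-1)
    rw [show m - 1 + 1 = m from by omega, hm0, sub_zero,
      show ((-1:ℤ)^(m-1)) = 1 from Even.neg_one_pow (Nat.Odd.sub_odd hodd odd_one),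
      one_smul] at h4
    exact h4
  have hd2R : ∀ a : ZMod (2*m), f a - f (a + 2) ∈ R := by
    intro a
    have h1 := sub_mem (hsR (a+2)) (h2R (a+2))
    rw [show a + 2 - 2 = a from by ring] at h1
    rw [show f (a+2) + f a - (f (a+2) + f (a+2)) = f a - f (a+2) from by abel] at h1
    exact h1
  have hevenR : ∀ (k : ℕ) (a : ZMod (2*m)), f a - f (a + ((2*k : ℕ) : ZMod (2*m))) ∈ R := by
    intro k
    induction k with
    | zero => intro a; simp
    | succ k ih =>
      intro a
      have h1 := add_mem (ih a) (hd2R (a + ((2*k : ℕ) : ZMod (2*m))))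
      rw [show f a - f (a + ((2*k : ℕ) : ZMod (2*m))) +
          (f (a + ((2*k : ℕ) : ZMod (2*m))) - f (a + ((2*k : ℕ) : ZMod (2*m)) + 2)) =
          f a - f (a + ((2*k : ℕ) : ZMod (2*m)) + 2) from by abel] at h1
      rw [show a + ((2*k : ℕ) : ZMod (2*m)) + 2 = a + ((2*(k+1) : ℕ) : ZMod (2*m))
        from by push_cast; ring] at h1
      exact h1
  have hstep1R : ∀ a : ZMod (2*m), f a - f (a + 1) ∈ R := by
    intro a
    have h1 := hdR a
    have h2 := hevenR ((m+3)/2) (a + ↑m - 2)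
    have e : (a + (m:ZMod (2*m)) - 2) + ((2 * ((m+3)/2) : ℕ) : ZMod (2*m)) = a + 1 := by
      rw [show 2 * ((m+3)/2) = m + 3 from by obtain ⟨t, ht⟩ := hodd; omega]
      push_cast
      linear_combination hmm
    rw [e] at h2
    have h3 := add_mem h1 h2
    rw [show f a - f (a + ↑m - 2) + (f (a + (m:ZMod (2*m)) - 2) - f (a+1)) = f a - f (a+1)
      from by abel] at h3
    exact h3
  have hstepsR : ∀ (k : ℕ) (a : ZMod (2*m)), f a - f (a + (k : ZMod (2*m))) ∈ R := by
    intro k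
    induction k with
    | zero => intro a; simp
    | succ k ih =>
      intro a
      have h1 := add_mem (ih a) (hstep1R (a + (k : ZMod (2*m))))
      rw [show f a - f (a + (k:ZMod (2*m))) +
          (f (a + (k:ZMod (2*m))) - f (a + (k:ZMod (2*m)) + 1)) =
          f a - f (a + (k:ZMod (2*m)) + 1) from by abel] at h1
      rw [show a + (k:ZMod (2*m)) + 1 = a + ((k+1 : ℕ) : ZMod (2*m)) from by push_cast; ring] at h1
      exact h1
  have hdiffR : ∀ a b : ZMod (2*m), f a - f b ∈ R := by
    intro a b
    have h1 := hstepsR (b - a).val a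
    rw [show a + (((b - a).val : ℕ) : ZMod (2*m)) = b from by
      rw [ZMod.natCast_val, ZMod.cast_id]; ring] at h1
    exact h1
  have honeR : f 1 ∈ R := by
    have h0 := hhR 0
    have hsum : ∑ l ∈ Finset.range (m-2),
        (f ((0:ZMod (2*m)) + 1 + (l:ZMod (2*m))) - f 1) ∈ R :=
      sum_mem fun l _ => hdiffR _ _
    have h1 := sub_mem h0 hsum
    rw [← Finset.sum_sub_distrib] at h1
    rw [show (∑ l ∈ Finset.range (m-2), (f ((0:ZMod (2*m)) + 1 + (l:ZMod (2*m))) -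
        (f ((0:ZMod (2*m)) + 1 + (l:ZMod (2*m))) - f 1))) =
        ∑ _l ∈ Finset.range (m-2), f 1 from Finset.sum_congr rfl fun l _ => by abel] at h1
    rw [Finset.sum_const, Finset.card_range] at h1
    have h2 : (((m-3)/2 : ℕ)) • (f (1:ZMod (2*m)) + f 1) ∈ R := nsmul_mem (h2R 1) _
    have h3 := sub_mem h1 h2
    rw [show (m-2) • f (1:ZMod (2*m)) - (((m-3)/2 : ℕ)) • (f 1 + f 1) = f 1 from by
      rw [smul_add, ← add_nsmul,
        show (m-3)/2 + (m-3)/2 = m - 3 from by obtain ⟨t, ht⟩ := hodd; omega,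
        show m - 2 = (m-3) + 1 from by omega, add_nsmul, one_nsmul]
      abel] at h3
    exact h3
  have hallR : ∀ b : ZMod (2*m), f b ∈ R := by
    intro b
    have h1 := sub_mem honeR (hdiffR 1 b)
    rw [show f (1:ZMod (2*m)) - (f 1 - f b) = f b from by abel] at h1
    exact h1
  refine ⟨hequiv, le_antisymm ?_ ?_⟩
  · rw [hR, LinearMap.range_eq_map,
      ← (Pi.basisFun ℤ (ZMod m ⊕ ZMod m ⊕ ZMod (2*m))).span_eq,
      Submodule.map_span, Submodule.span_le]
    rintro v ⟨u, ⟨k, rfl⟩, rfl⟩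
    simp only [SetLike.mem_coe, Pi.basisFun_apply]
    rcases k with i | i | j
    · rw [hφa]
      exact add_mem (Submodule.subset_span ⟨_, rfl⟩) (Submodule.subset_span ⟨_, rfl⟩)
    · rw [hφb]
      exact neg_mem (add_mem (Submodule.subset_span ⟨_, rfl⟩) (Submodule.subset_span ⟨_, rfl⟩))
    · rw [hφc]
      exact add_mem (sum_mem fun l _ => Submodule.subset_span ⟨_, rfl⟩)
        (Submodule.subset_span ⟨_, rfl⟩)
  · rw [Submodule.span_le]
    rintro v ⟨b, rfl⟩
    exact hallR b
end

section
/- In the setting of the previous construction ($n = 2m$, $m \geq 3$ odd, $G = D_n$, $\varphi : P \to I$ surjective), the kernel $C = \ker(\varphi)$ is free of $\mathbb{Z}$-rank $2m + 1$, and the elements $a_i = \alpha_i + \beta_i$ ($1 \leq i \leq m$), $b_i = x^{i-1}(\alpha_1 + \beta_m - \gamma_1 - \gamma_{m+1})$ ($1 \leq i \leq m$), $c_1 = \sum_{i=1}^m \alpha_i$ form a $\mathbb{Z}$-basis of $C$. -/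
/-!
Write `v = Σ aᵢ αᵢ + bᵢ βᵢ + cⱼ γⱼ` and let `k ↦ k̄` be reduction `ℤ/2m → ℤ/m`. Comparing the
coordinates `k` and `k + m` of `φ v = 0` shows that `sₖ = cₖ - c_{k+m}` satisfies
`s_{k+2} = -sₖ`; as `m` is odd this forces `s = 0`, i.e. `c` is `m`-periodic. For `m`-periodic
`c` one has `(φ v)ₖ = g(k̄) - g(k̄ - 1)` with `gᵢ = aᵢ - bᵢ + cᵢ - c_{i+1}`, so on `ker φ` the
function `g` is constant. The linear map `r` reading off `bᵢ + c_{i+1}`, `-cᵢ` and `g₀` sends the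
proposed basis to the standard basis, and by the above `ker φ ∩ ker r = 0`; hence the proposed
family is a basis of `ker φ`.
-/

theorem linearIndependent_and_span_eq_ker_of_retraction {R M N τ : Type*} [Ring R]
    [AddCommGroup M] [Module R M] [AddCommGroup N] [Module R N] [Fintype τ] [DecidableEq τ]
    (φ : M →ₗ[R] N) (r : M →ₗ[R] τ → R) (b : τ → M) (hφb : ∀ t, φ (b t) = 0)
    (hrb : ∀ t, r (b t) = Pi.single t 1) (hinj : ∀ v, φ v = 0 → r v = 0 → v = 0) :
    LinearIndependent R b ∧ Submodule.span R (Set.range b) = LinearMap.ker φ := by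
  refine ⟨LinearIndependent.of_comp r ?_, le_antisymm ?_ fun v hv => ?_⟩
  · convert (Pi.basisFun R τ).linearIndependent
    ext1 t
    simp [hrb]
  · rw [Submodule.span_le]
    rintro _ ⟨t, rfl⟩
    exact hφb t
  · have hv' : v = ∑ t, r v t • b t := by
      refine sub_eq_zero.mp (hinj _ ?_ ?_)
      · simp [hφb, LinearMap.mem_ker.mp hv]
      · simp only [map_sub, map_sum, map_smul, hrb, ← Pi.single_smul', smul_eq_mul, mul_one,
          Finset.univ_sum_single, sub_self]
    rw [hv']
    exact Submodule.sum_mem _ fun t _ => Submodule.smul_mem _ _ (Submodule.subset_span ⟨t, rfl⟩)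

namespace DihedralLattice

variable {m : ℕ}

abbrev reduce (m : ℕ) : ZMod (2 * m) →+* ZMod m := ZMod.castHom (dvd_mul_left m 2) (ZMod m)

@[simp]
theorem reduce_add_natCast (k : ZMod (2 * m)) : reduce m (k + m) = reduce m k := by
  simp

theorem natCast_add_natCast_self : (m : ZMod (2 * m)) + m = 0 := by
  rw [← two_mul]; exact_mod_cast ZMod.natCast_self (2 * m)

theorem add_natCast_add_natCast (k : ZMod (2 * m)) : k + m + m = k := by
  rw [add_assoc, natCast_add_natCast_self, add_zero]

-- The coordinates `.inl i`, `.inr (.inl i)` and `.inr (.inr j)` are those of `αᵢ`, `βᵢ`, `γⱼ`.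
variable (m) in
abbrev Index := ZMod m ⊕ ZMod m ⊕ ZMod (2 * m)

/- The paper's `φ` in coordinates: `αᵢ ↦ uᵢ - u_{i+1}` and `βᵢ ↦ -(uᵢ - u_{i+1})`, where `uᵢ` is the
indicator of the fibre of `reduce m` over `i`, and `γⱼ ↦ eⱼ - e_{j+m-1} + e_{j+m} - e_{j+m+1}`. -/
variable (m) in
def phi : (Index m → ℤ) →ₗ[ℤ] (ZMod (2 * m) → ℤ) where
  toFun v k :=
    (v (.inl (reduce m k)) - v (.inr (.inl (reduce m k))))
      - (v (.inl (reduce m k - 1)) - v (.inr (.inl (reduce m k - 1))))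
      + (v (.inr (.inr k)) - v (.inr (.inr (k + m + 1))))
      + (v (.inr (.inr (k + m))) - v (.inr (.inr (k + m - 1))))
  map_add' v w := by ext k; simp only [Pi.add_apply]; ring
  map_smul' c v := by ext k; simp only [Pi.smul_apply, smul_eq_mul, RingHom.id_apply]; ring

def potential (v : Index m → ℤ) (i : ZMod m) : ℤ :=
  v (.inl i) - v (.inr (.inl i)) + v (.inr (.inr (i.val : ZMod (2 * m))))
    - v (.inr (.inr ((i + 1).val : ZMod (2 * m))))

variable (m) in
def kerCoords : (Index m → ℤ) →ₗ[ℤ] (ZMod m ⊕ ZMod m ⊕ Unit → ℤ) where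
  toFun v := Sum.elim (fun i => v (.inr (.inl i)) + v (.inr (.inr ((i + 1).val : ZMod (2 * m)))))
    (Sum.elim (fun i => -v (.inr (.inr (i.val : ZMod (2 * m))))) fun _ => potential v 0)
  map_add' v w := by
    ext (i | i | _) <;> simp only [potential, Pi.add_apply, Sum.elim_inl, Sum.elim_inr] <;> ring
  map_smul' c v := by
    ext (i | i | _) <;>
      simp only [potential, Pi.smul_apply, smul_eq_mul, RingHom.id_apply, Sum.elim_inl,
        Sum.elim_inr] <;> ring

theorem periodic_of_phi_eq_zero (hodd : Odd m) {v : Index m → ℤ} (hv : phi m v = 0)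
    (k : ZMod (2 * m)) :
    v (.inr (.inr (k + m))) = v (.inr (.inr k)) := by
  set s : ZMod (2 * m) → ℤ := fun k => v (.inr (.inr k)) - v (.inr (.inr (k + m))) with hs
  have hanti : Function.Antiperiodic s 2 := by
    intro x
    have h1 := congr_fun hv (x + 1)
    have h2 := congr_fun hv (x + 1 + m)
    simp only [phi, LinearMap.coe_mk, AddHom.coe_mk, Pi.zero_apply, reduce_add_natCast,
      add_natCast_add_natCast] at h1 h2
    simp only [hs]
    ring_nf at h1 h2 ⊢
    linarith
  obtain ⟨n, hn⟩ := hodd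
  have h := hanti.odd_nsmul_antiperiodic n k
  rw [← hn, nsmul_eq_mul, mul_two, natCast_add_natCast_self, add_zero] at h
  simp only [hs] at h
  linarith

variable [NeZero m]

@[simp]
theorem reduce_natCast_val (i : ZMod m) : reduce m (i.val : ZMod (2 * m)) = i := by
  simp

theorem reduce_eq_reduce_iff {k a : ZMod (2 * m)} :
    reduce m k = reduce m a ↔ k = a ∨ k = a + m := by
  refine ⟨fun h => ?_, by rintro (rfl | rfl) <;> simp⟩
  obtain ⟨q, hq⟩ : m ∣ (k - a).val := by
    rw [← ZMod.natCast_eq_zero_iff, ← ZMod.cast_eq_val,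
      ← ZMod.castHom_apply (h := dvd_mul_left m 2), map_sub, h, sub_self]
  have hq2 : q < 2 := by nlinarith [ZMod.val_lt (k - a), NeZero.pos m]
  interval_cases q
  · left; rw [← sub_eq_zero, ← ZMod.val_eq_zero, hq, mul_zero]
  · right; rw [← sub_eq_iff_eq_add', ← ZMod.natCast_zmod_val (k - a), hq, mul_one]

theorem ne_add_natCast (a : ZMod (2 * m)) : a ≠ a + m := by
  intro h
  have h' : ((m : ℕ) : ZMod (2 * m)).val = 0 := by
    rw [ZMod.val_eq_zero]; linear_combination -h
  rw [ZMod.val_natCast_of_lt (by have := NeZero.pos m; omega)] at h'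
  exact NeZero.ne m h'

theorem single_add_single_add_natCast_apply (a k : ZMod (2 * m)) :
    (Pi.single a 1 + Pi.single (a + m) 1 : ZMod (2 * m) → ℤ) k =
      if reduce m k = reduce m a then 1 else 0 := by
  simp only [reduce_eq_reduce_iff]
  by_cases h : k = a
  · subst h; simp [ne_add_natCast k]
  · simp [Pi.single_apply, h]

theorem single_sub_single_add_apply (a k : ZMod (2 * m)) :
    ((Pi.single a 1 - Pi.single (a + 1) 1) + (Pi.single (m + a) 1 - Pi.single (m + a + 1) 1) :
      ZMod (2 * m) → ℤ) k =
      (if reduce m k = reduce m a then 1 else 0) -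
        if reduce m k - 1 = reduce m a then 1 else 0 := by
  have h0 := single_add_single_add_natCast_apply a k
  have h1 := single_add_single_add_natCast_apply (a + 1) k
  simp only [map_add, map_one, ← sub_eq_iff_eq_add] at h1
  simp only [Pi.add_apply, Pi.sub_apply] at h0 h1 ⊢
  rw [add_comm (m : ZMod (2 * m)) a, add_right_comm a, ← h0, ← h1]
  ring

theorem apply_natCast_val_reduce {c : ZMod (2 * m) → ℤ} (hc : ∀ k, c (k + m) = c k)
    (k : ZMod (2 * m)) : c ((reduce m k).val : ZMod (2 * m)) = c k := by
  rcases reduce_eq_reduce_iff.mp (reduce_natCast_val (reduce m k)).symm with h | h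
  · rw [← h]
  · have := hc ((reduce m k).val : ZMod (2 * m))
    rwa [← h, eq_comm] at this

theorem eq_phi_of_apply_single (f : ZMod (2 * m) → (ZMod (2 * m) → ℤ))
    (hf : ∀ i, f i = Pi.single i 1 - Pi.single (i + 1) 1)
    (φ : (Index m → ℤ) →ₗ[ℤ] (ZMod (2 * m) → ℤ))
    (hφa : ∀ i : ZMod m, φ (Pi.single (.inl i) 1) =
      f (i.val : ZMod (2 * m)) + f ((m : ZMod (2 * m)) + (i.val : ZMod (2 * m))))
    (hφb : ∀ i : ZMod m, φ (Pi.single (.inr (.inl i)) 1) =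
      -(f (i.val : ZMod (2 * m)) + f ((m : ZMod (2 * m)) + (i.val : ZMod (2 * m)))))
    (hφc : ∀ j : ZMod (2 * m), φ (Pi.single (.inr (.inr j)) 1) =
      (∑ l ∈ Finset.range (m - 1), f (j + (l : ZMod (2 * m)))) + f (j + (m : ZMod (2 * m)))) :
    φ = phi m := by
  refine LinearMap.pi_ext' fun t => LinearMap.ext_ring ?_
  simp only [LinearMap.comp_apply, LinearMap.coe_single]
  ext k
  rcases t with i | i | j
  · rw [hφa, hf, hf, single_sub_single_add_apply]
    simp [phi, Pi.single_apply]
  · rw [hφb, hf, hf, Pi.neg_apply, single_sub_single_add_apply]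
    simp [phi, Pi.single_apply]
    ring
  · have htel : ∑ l ∈ Finset.range (m - 1), f (j + (l : ZMod (2 * m))) =
        Pi.single j 1 - Pi.single (j + (m - 1 : ℕ)) 1 := by
      simp only [hf]
      convert Finset.sum_range_sub'
        (fun l : ℕ => (Pi.single (j + l) 1 : ZMod (2 * m) → ℤ)) (m - 1) using 3 <;>
        simp [add_assoc]
    rw [hφc, htel, hf, Nat.cast_sub NeZero.one_le, Nat.cast_one]
    have hm2 := natCast_add_natCast_self (m := m)
    have e1 (k : ZMod (2 * m)) : k + m + 1 = j ↔ k = j + (m - 1) :=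
      ⟨fun h => by linear_combination h - hm2, fun h => by linear_combination h + hm2⟩
    have e2 (k : ZMod (2 * m)) : k + m = j ↔ k = j + m :=
      ⟨fun h => by linear_combination h - hm2, fun h => by linear_combination h + hm2⟩
    have e3 (k : ZMod (2 * m)) : k + m - 1 = j ↔ k = j + m + 1 :=
      ⟨fun h => by linear_combination h - hm2, fun h => by linear_combination h + hm2⟩
    simp [phi, Pi.single_apply, e1, e2, e3]

variable (m) in
def kerBasis : ZMod m ⊕ ZMod m ⊕ Unit → Index m → ℤ :=
  Sum.elim (fun i => Pi.single (.inl i) 1 + Pi.single (.inr (.inl i)) 1)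
    (Sum.elim (fun i => Pi.single (.inl i) 1 + Pi.single (.inr (.inl (i - 1))) 1
        - Pi.single (.inr (.inr (i.val : ZMod (2 * m)))) 1
        - Pi.single (.inr (.inr ((m : ZMod (2 * m)) + (i.val : ZMod (2 * m))))) 1)
      fun _ => ∑ i, Pi.single (.inl i) 1)

theorem kerBasis_inr_inl_apply_inr_inr (i : ZMod m) (k : ZMod (2 * m)) :
    kerBasis m (.inr (.inl i)) (.inr (.inr k)) = -if reduce m k = i then 1 else 0 := by
  have h := single_add_single_add_natCast_apply (i.val : ZMod (2 * m)) k
  simp only [Pi.add_apply, reduce_natCast_val] at h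
  rw [← h, add_comm (i.val : ZMod (2 * m))]
  simp only [kerBasis, Sum.elim_inl, Sum.elim_inr, Pi.sub_apply, Pi.add_apply, Pi.single_apply,
    Sum.inr.injEq, reduceCtorEq, if_false]
  ring

theorem potential_kerBasis (t : ZMod m ⊕ ZMod m ⊕ Unit) (j : ZMod m) :
    potential (kerBasis m t) j = (Pi.single (.inr (.inr ())) 1 : _ → ℤ) t := by
  rcases t with i | i | _
  · simp [potential, kerBasis, Pi.single_apply]
  · simp only [potential, kerBasis_inr_inl_apply_inr_inr, reduce_natCast_val]
    simp only [kerBasis, Sum.elim_inl, Sum.elim_inr, Pi.sub_apply, Pi.add_apply, Pi.single_apply,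
      Sum.inr.injEq, Sum.inl.injEq, reduceCtorEq, if_false, eq_sub_iff_add_eq]
    ring
  · simp [potential, kerBasis, Pi.single_apply]

theorem phi_apply_of_periodic {v : Index m → ℤ}
    (hv : ∀ k, v (.inr (.inr (k + m))) = v (.inr (.inr k))) (k : ZMod (2 * m)) :
    phi m v k = potential v (reduce m k) - potential v (reduce m k - 1) := by
  have hc := apply_natCast_val_reduce (c := fun k => v (.inr (.inr k))) hv
  simp only [phi, LinearMap.coe_mk, AddHom.coe_mk, potential, sub_add_cancel,
    ← hc k, ← hc (k + m + 1), ← hc (k + m), ← hc (k + m - 1)]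
  simp only [map_add, map_sub, map_one, map_natCast, ZMod.natCast_self, add_zero]
  ring

theorem phi_kerBasis (t : ZMod m ⊕ ZMod m ⊕ Unit) : phi m (kerBasis m t) = 0 := by
  have hper : ∀ k, kerBasis m t (.inr (.inr (k + m))) = kerBasis m t (.inr (.inr k)) := by
    rcases t with i | i | _
    · simp [kerBasis]
    · intro k
      rw [kerBasis_inr_inl_apply_inr_inr, kerBasis_inr_inl_apply_inr_inr, reduce_add_natCast]
    · simp [kerBasis]
  ext k
  simp [phi_apply_of_periodic hper, potential_kerBasis]

theorem kerCoords_kerBasis (t : ZMod m ⊕ ZMod m ⊕ Unit) :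
    kerCoords m (kerBasis m t) = Pi.single t 1 := by
  ext (i | i | _)
  · simp only [kerCoords, LinearMap.coe_mk, AddHom.coe_mk, Sum.elim_inl]
    rcases t with j | j | _
    · simp [kerBasis, Pi.single_apply]
    · rw [kerBasis_inr_inl_apply_inr_inr, reduce_natCast_val]
      simp [kerBasis, Pi.single_apply, eq_sub_iff_add_eq]
    · simp [kerBasis]
  · simp only [kerCoords, LinearMap.coe_mk, AddHom.coe_mk, Sum.elim_inl, Sum.elim_inr]
    rcases t with j | j | _
    · simp [kerBasis]
    · rw [kerBasis_inr_inl_apply_inr_inr, reduce_natCast_val]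
      simp [Pi.single_apply]
    · simp [kerBasis]
  · simp only [kerCoords, LinearMap.coe_mk, AddHom.coe_mk, Sum.elim_inr, potential_kerBasis]
    exact Pi.single_comm _ _ _

theorem potential_eq_potential_zero {v : Index m → ℤ} (hv : phi m v = 0)
    (hper : ∀ k, v (.inr (.inr (k + m))) = v (.inr (.inr k))) (i : ZMod m) :
    potential v i = potential v 0 := by
  have hP : Function.Periodic (potential v) 1 := by
    intro j
    have h := congr_fun hv ((j + 1).val : ZMod (2 * m))
    rw [phi_apply_of_periodic hper, reduce_natCast_val, add_sub_cancel_right, Pi.zero_apply] at h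
    exact sub_eq_zero.mp h
  simpa using hP.nat_mul_eq i.val

theorem eq_zero_of_phi_eq_zero_of_kerCoords_eq_zero (hodd : Odd m) {v : Index m → ℤ}
    (hv : phi m v = 0) (hr : kerCoords m v = 0) : v = 0 := by
  have hper := periodic_of_phi_eq_zero hodd hv
  have hγ (k : ZMod (2 * m)) : v (.inr (.inr k)) = 0 := by
    simpa only [kerCoords, LinearMap.coe_mk, AddHom.coe_mk, Sum.elim_inl, Sum.elim_inr,
      apply_natCast_val_reduce (c := fun k => v (.inr (.inr k))) hper, Pi.zero_apply,
      neg_eq_zero] using congr_fun hr (.inr (.inl (reduce m k)))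
  have hβ (i : ZMod m) : v (.inr (.inl i)) = 0 := by
    simpa [kerCoords, hγ] using congr_fun hr (.inl i)
  have hα (i : ZMod m) : v (.inl i) = 0 := by
    have h := (potential_eq_potential_zero hv hper i).trans (congr_fun hr (.inr (.inr ())))
    simpa [potential, hβ, hγ] using h
  ext (i | i | k)
  exacts [hα i, hβ i, hγ k]

end DihedralLattice

open DihedralLattice in
/-- In the setting of the construction for `n = 2m`, `m ≥ 3` odd, `G = D_n`:
the kernel `C = ker φ` is free of `ℤ`-rank `2m+1`, with `ℤ`-basis
`a_i = α_i + β_i`, `b_i = x^{i-1}(α_1 + β_m - γ_1 - γ_{m+1})` (`1 ≤ i ≤ m`) and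
`c_1 = α_1 + ⋯ + α_m`. -/
theorem stmt_4 (m : ℕ) (hm : 3 ≤ m) (hodd : Odd m)
    (f : ZMod (2 * m) → (ZMod (2 * m) → ℤ))
    (hf : ∀ i, f i = Pi.single i 1 - Pi.single (i + 1) 1)
    (φ : ((ZMod m ⊕ ZMod m ⊕ ZMod (2 * m)) → ℤ) →ₗ[ℤ] (ZMod (2 * m) → ℤ))
    (hφa : ∀ i : ZMod m, φ (Pi.single (Sum.inl i) 1) =
      f (i.val : ZMod (2 * m)) + f ((m : ZMod (2 * m)) + (i.val : ZMod (2 * m))))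
    (hφb : ∀ i : ZMod m, φ (Pi.single (Sum.inr (Sum.inl i)) 1) =
      -(f (i.val : ZMod (2 * m)) + f ((m : ZMod (2 * m)) + (i.val : ZMod (2 * m)))))
    (hφc : ∀ j : ZMod (2 * m), φ (Pi.single (Sum.inr (Sum.inr j)) 1) =
      (∑ l ∈ Finset.range (m - 1), f (j + (l : ZMod (2 * m)))) + f (j + (m : ZMod (2 * m)))) :
    haveI : NeZero m := ⟨by omega⟩
    ∀ B : (ZMod m ⊕ ZMod m ⊕ Unit) → ((ZMod m ⊕ ZMod m ⊕ ZMod (2 * m)) → ℤ),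
      (∀ i : ZMod m, B (Sum.inl i) =
        Pi.single (Sum.inl i) 1 + Pi.single (Sum.inr (Sum.inl i)) 1) →
      (∀ i : ZMod m, B (Sum.inr (Sum.inl i)) =
        Pi.single (Sum.inl i) 1 + Pi.single (Sum.inr (Sum.inl (i - 1))) 1
          - Pi.single (Sum.inr (Sum.inr (i.val : ZMod (2 * m)))) 1
          - Pi.single (Sum.inr (Sum.inr ((m : ZMod (2 * m)) + (i.val : ZMod (2 * m))))) 1) →
      (B (Sum.inr (Sum.inr ())) = ∑ i : ZMod m, Pi.single (Sum.inl i) 1) →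
      (∀ t, φ (B t) = 0) ∧ LinearIndependent ℤ B ∧
        Submodule.span ℤ (Set.range B) = LinearMap.ker φ ∧
        Module.finrank ℤ ↥(LinearMap.ker φ) = 2 * m + 1 := by
  have : NeZero m := ⟨by omega⟩
  intro B hB1 hB2 hB3
  obtain rfl : B = kerBasis m := by
    ext1 (i | i | _)
    exacts [hB1 i, hB2 i, hB3]
  obtain rfl := eq_phi_of_apply_single f hf φ hφa hφb hφc
  obtain ⟨hli, hspan⟩ := linearIndependent_and_span_eq_ker_of_retraction (phi m) (kerCoords m)
    (kerBasis m) phi_kerBasis kerCoords_kerBasis fun _ =>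
      eq_zero_of_phi_eq_zero_of_kerCoords_eq_zero hodd
  refine ⟨phi_kerBasis, hli, hspan, ?_⟩
  rw [← hspan, finrank_span_eq_card hli]
  simp [ZMod.card]
  ring
end

section
/- Let $m \geq 3$ be odd and let $C$ be the $D_m$-lattice of rank $2m+1$ defined by: basis $a_1,\ldots,a_m,b_1,\ldots,b_m,c_1$ with $x$ cyclically permuting the $a_i$ and the $b_i$ and fixing $c_1$, and $y$ acting by $a_i \leftrightarrow a_{m-i}$, $a_m \mapsto a_m$, $b_i \leftrightarrow b_{m+1-i}$, $b_{(m+1)/2} \mapsto b_{(m+1)/2}$, $c_1 \mapsto \sum_{i=1}^m a_i - c_1$. Then the zeroth Tate cohomology $\widehat{H}^0(D_m, C) = C^{D_m}/N_{D_m}(C)$ is isomorphic to $\mathbb{Z}/2\mathbb{Z}$, where $N_{D_m}(C)$ is the image of the norm map $c \mapsto \sum_{g \in D_m} g \cdot c$. -/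
/-!
An invariant vector has constant `a`- and constant `b`-coordinates, and its `c₁`-coordinate
vanishes because `y` sends `c₁` to `∑ aᵢ - c₁`; so `C^{D_m} = ℤA ⊕ ℤB` with `A = ∑ aᵢ`,
`B = ∑ bᵢ`. The norm factors as `N_{D_m} = (1 + y) ∘ N_{⟨x⟩}`, and `N_{⟨x⟩} w` is `x`-invariant,
so its `b₀`- and `b₁`-coordinates agree and every norm has even `b₀`-coordinate. Conversely
`N(b₀) = 2B`, `N(a₀) = 2A` and `N(c₁) = mA`, so `A` is a norm because `m` is odd. Hence the
`B`-coefficient mod 2 identifies `Ĥ⁰(D_m, C)` with `ℤ/2ℤ`.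
-/

open DihedralGroup

theorem DihedralGroup.sum_eq_sum_r_add_sum_sr {n : ℕ} [NeZero n] {M : Type*} [AddCommMonoid M]
    (f : DihedralGroup n → M) : ∑ g, f g = ∑ k, f (r k) + ∑ k, f (sr k) := by
  rw [← equivSum.symm.sum_comp, Fintype.sum_sum_type]
  rfl

theorem ZMod.apply_eq_apply_zero_of_periodic {n : ℕ} [NeZero n] {α : Type*} {f : ZMod n → α}
    (hf : Function.Periodic f 1) (i : ZMod n) : f i = f 0 := by
  simpa using hf.nat_mul_eq i.val

namespace Representation

theorem iInf_ker_sub_id_eq_invariants {k G V : Type*} [CommRing k] [Group G] [AddCommGroup V]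
    [Module k V] (ρ : Representation k G V) :
    ⨅ g, LinearMap.ker (ρ g - LinearMap.id) = ρ.invariants := by
  ext v
  simp [Submodule.mem_iInf, sub_eq_zero]

variable {n : ℕ} [NeZero n] {k V : Type*} [CommRing k] [AddCommGroup V] [Module k V]
  (ρ : Representation k (DihedralGroup n) V)

theorem apply_r_of_apply_r_one {e : ZMod n → V} (he : ∀ i, ρ (r 1) (e i) = e (i + 1))
    (i j : ZMod n) : ρ (r j) (e i) = e (i + j) := by
  suffices ∀ l : ℕ, ρ (r l) (e i) = e (i + l) by simpa using this j.val
  intro l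
  induction l with
  | zero => simp
  | succ l ih =>
    rw [Nat.cast_succ, add_comm (l : ZMod n), ← r_mul_r, map_mul, Module.End.mul_apply, ih, he,
      add_right_comm, add_assoc]

theorem mem_invariants_iff_r_one_sr_zero (v : V) :
    v ∈ ρ.invariants ↔ ρ (r 1) v = v ∧ ρ (sr 0) v = v := by
  refine ⟨fun h => ⟨h _, h _⟩, fun ⟨hr, hsr⟩ => ?_⟩
  have hrj (j : ZMod n) : ρ (r j) v = v :=
    ρ.apply_r_of_apply_r_one (e := fun _ => v) (fun _ => hr) 0 j
  rintro (j | j)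
  · exact hrj j
  · rw [← zero_add j, ← sr_mul_r, map_mul, Module.End.mul_apply, hrj, hsr]

theorem apply_r_one_sum_apply_r (v : V) : ρ (r 1) (∑ j, ρ (r j) v) = ∑ j, ρ (r j) v := by
  simp only [map_sum, ← Module.End.mul_apply, ← map_mul, r_mul_r]
  exact Fintype.sum_equiv (Equiv.addLeft 1) _ _ fun _ => rfl

theorem norm_apply_eq (v : V) : ρ.norm v = ∑ j, ρ (r j) v + ρ (sr 0) (∑ j, ρ (r j) v) := by
  rw [norm, LinearMap.sum_apply, sum_eq_sum_r_add_sum_sr, map_sum]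
  simp only [← Module.End.mul_apply, ← map_mul, sr_mul_r, zero_add]

end Representation

namespace DihedralLattice

variable (m : ℕ)

/- The basis vectors `aᵢ`, `bᵢ`, `c₁` are `Pi.single j 1` for `j = .inl i`, `.inr (.inl i)`,
`.inr (.inr ())`; the paper's `b_{m+1-i}` is `b_{1-i}` in this indexing. -/
abbrev C := (ZMod m ⊕ ZMod m ⊕ Unit) → ℤ

structure IsCAction [NeZero m] (ρ : Representation ℤ (DihedralGroup m) (C m)) : Prop where
  r_one_inl : ∀ i, ρ (r 1) (Pi.single (.inl i) 1) = Pi.single (.inl (i + 1)) 1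
  r_one_inr_inl : ∀ i,
    ρ (r 1) (Pi.single (.inr (.inl i)) 1) = Pi.single (.inr (.inl (i + 1))) 1
  r_one_inr_inr : ρ (r 1) (Pi.single (.inr (.inr ())) 1) = Pi.single (.inr (.inr ())) 1
  sr_zero_inl : ∀ i, ρ (sr 0) (Pi.single (.inl i) 1) = Pi.single (.inl (-i)) 1
  sr_zero_inr_inl : ∀ i,
    ρ (sr 0) (Pi.single (.inr (.inl i)) 1) = Pi.single (.inr (.inl (1 - i))) 1
  sr_zero_inr_inr : ρ (sr 0) (Pi.single (.inr (.inr ())) 1) =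
    (∑ i : ZMod m, Pi.single (.inl i) 1) - Pi.single (.inr (.inr ())) 1

def sumA : C m := Sum.elim 1 0

def sumB : C m := Sum.elim 0 (Sum.elim 1 0)

/- `rotate` and `reflect` are the actions of `x` and `y` in coordinates; since `y c₁ = ∑ aᵢ - c₁`,
the `c₁`-coordinate of `v` enters every `a`-coordinate of `y v`. -/
def rotate : C m →ₗ[ℤ] C m where
  toFun v := Sum.elim (fun i => v (.inl (i - 1)))
    (Sum.elim (fun i => v (.inr (.inl (i - 1)))) fun _ => v (.inr (.inr ())))
  map_add' u v := by ext (i | i | _) <;> rfl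
  map_smul' c v := by ext (i | i | _) <;> rfl

def reflect : C m →ₗ[ℤ] C m where
  toFun v := Sum.elim (fun i => v (.inl (-i)) + v (.inr (.inr ())))
    (Sum.elim (fun i => v (.inr (.inl (1 - i)))) fun _ => -v (.inr (.inr ())))
  map_add' u v := by ext (i | i | _) <;> simp [add_add_add_comm, add_comm]
  map_smul' c v := by ext (i | i | _) <;> simp [mul_add]

variable {m} [NeZero m]

theorem sum_single_inl : ∑ i : ZMod m, (Pi.single (.inl i) 1 : C m) = sumA m := by
  ext (i | i | _) <;> simp [sumA, Finset.sum_apply, Pi.single_apply]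

theorem sum_single_inr_inl : ∑ i : ZMod m, (Pi.single (.inr (.inl i)) 1 : C m) = sumB m := by
  ext (i | i | _) <;> simp [sumB, Finset.sum_apply, Pi.single_apply]

namespace IsCAction

variable {ρ : Representation ℤ (DihedralGroup m) (C m)}

theorem r_one_eq_rotate (hC : IsCAction m ρ) : ρ (r 1) = rotate m := by
  refine (Pi.basisFun ℤ _).ext fun j => ?_
  rcases j with i | i | _ <;> ext (j | j | _) <;>
    simp [rotate, hC.r_one_inl, hC.r_one_inr_inl, hC.r_one_inr_inr, Pi.single_apply,
      sub_eq_iff_eq_add]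

theorem sr_zero_eq_reflect (hC : IsCAction m ρ) : ρ (sr 0) = reflect m := by
  refine (Pi.basisFun ℤ _).ext fun j => ?_
  rcases j with i | i | _ <;> ext (j | j | _) <;>
    simp [reflect, hC.sr_zero_inl, hC.sr_zero_inr_inl, hC.sr_zero_inr_inr, Pi.single_apply,
      Finset.sum_apply, neg_eq_iff_eq_neg, sub_eq_iff_eq_add, eq_sub_iff_add_eq, add_comm,
      eq_comm (a := (1 : ZMod m))]

theorem eq_of_mem_invariants (hC : IsCAction m ρ) {v : C m} (hv : v ∈ ρ.invariants) :
    v = v (.inl 0) • sumA m + v (.inr (.inl 0)) • sumB m := by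
  rw [ρ.mem_invariants_iff_r_one_sr_zero, hC.r_one_eq_rotate, hC.sr_zero_eq_reflect] at hv
  obtain ⟨hrot, hrefl⟩ := hv
  have ha : Function.Periodic (fun i => v (.inl i)) 1 := fun i => by
    simpa [rotate] using (congr_fun hrot (.inl (i + 1))).symm
  have hb : Function.Periodic (fun i => v (.inr (.inl i))) 1 := fun i => by
    simpa [rotate] using (congr_fun hrot (.inr (.inl (i + 1)))).symm
  have hc : v (.inr (.inr ())) = 0 := by
    have := congr_fun hrefl (.inr (.inr ()))
    simp only [reflect, LinearMap.coe_mk, AddHom.coe_mk, Sum.elim_inr] at this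
    omega
  ext (i | i | _)
  · simpa [sumA, sumB] using ZMod.apply_eq_apply_zero_of_periodic ha i
  · simpa [sumA, sumB] using ZMod.apply_eq_apply_zero_of_periodic hb i
  · simpa [sumA, sumB] using hc

theorem sumB_mem_invariants (hC : IsCAction m ρ) : sumB m ∈ ρ.invariants := by
  rw [ρ.mem_invariants_iff_r_one_sr_zero, hC.r_one_eq_rotate, hC.sr_zero_eq_reflect]
  constructor <;> ext (i | i | _) <;> rfl

theorem norm_single_inl (hC : IsCAction m ρ) :
    ρ.norm (Pi.single (.inl 0) 1) = 2 • sumA m := by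
  have hreflect : reflect m (sumA m) = sumA m := by ext (i | i | _) <;> rfl
  simp_rw [ρ.norm_apply_eq, ρ.apply_r_of_apply_r_one (e := fun i => Pi.single (.inl i) 1)
    hC.r_one_inl, zero_add, sum_single_inl, hC.sr_zero_eq_reflect, hreflect, two_smul]

theorem norm_single_inr_inl (hC : IsCAction m ρ) :
    ρ.norm (Pi.single (.inr (.inl 0)) 1) = 2 • sumB m := by
  have hreflect : reflect m (sumB m) = sumB m := by ext (i | i | _) <;> rfl
  simp_rw [ρ.norm_apply_eq, ρ.apply_r_of_apply_r_one (e := fun i => Pi.single (.inr (.inl i)) 1)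
    hC.r_one_inr_inl, zero_add, sum_single_inr_inl, hC.sr_zero_eq_reflect, hreflect, two_smul]

theorem norm_single_inr_inr (hC : IsCAction m ρ) :
    ρ.norm (Pi.single (.inr (.inr ())) 1) = m • sumA m := by
  simp_rw [ρ.norm_apply_eq, ρ.apply_r_of_apply_r_one (e := fun _ => Pi.single (.inr (.inr ())) 1)
    (fun _ => hC.r_one_inr_inr) 0, Finset.sum_const, Finset.card_univ, ZMod.card, map_nsmul,
    hC.sr_zero_inr_inr, sum_single_inl, smul_sub, add_sub_cancel]

theorem sumA_mem_range_norm (hC : IsCAction m ρ) (hodd : Odd m) :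
    sumA m ∈ LinearMap.range ρ.norm := by
  obtain ⟨u, hu⟩ := hodd
  refine ⟨Pi.single (.inr (.inr ())) 1 - u • Pi.single (.inl 0) 1, ?_⟩
  rw [map_sub, map_nsmul, hC.norm_single_inr_inr, hC.norm_single_inl, hu]
  module

theorem even_norm_apply_inr_inl (hC : IsCAction m ρ) (w : C m) :
    Even (ρ.norm w (.inr (.inl 0))) := by
  have hu := ρ.apply_r_one_sum_apply_r w
  rw [hC.r_one_eq_rotate] at hu
  rw [ρ.norm_apply_eq, hC.sr_zero_eq_reflect]
  set u := ∑ j, ρ (r j) w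
  have hu1 : u (.inr (.inl 1)) = u (.inr (.inl 0)) := by
    simpa [rotate] using (congr_fun hu (.inr (.inl 1))).symm
  exact ⟨u (.inr (.inl 0)), by simp [reflect, hu1]⟩

theorem mem_range_norm_iff (hC : IsCAction m ρ) (hodd : Odd m) {v : C m}
    (hv : v ∈ ρ.invariants) : v ∈ LinearMap.range ρ.norm ↔ Even (v (.inr (.inl 0))) := by
  refine ⟨fun ⟨w, hw⟩ => hw ▸ hC.even_norm_apply_inr_inl w, fun ⟨t, ht⟩ => ?_⟩
  have hB : 2 • sumB m ∈ LinearMap.range ρ.norm := ⟨_, hC.norm_single_inr_inl⟩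
  rw [hC.eq_of_mem_invariants hv, ht, show (t + t) • sumB m = t • 2 • sumB m by module]
  exact add_mem (Submodule.smul_mem _ _ (hC.sumA_mem_range_norm hodd))
    (Submodule.smul_mem _ _ hB)

theorem nonempty_quotient_equiv_zmod_two (hC : IsCAction m ρ) (hodd : Odd m) :
    Nonempty ((ρ.invariants ⧸ (LinearMap.range ρ.norm).comap ρ.invariants.subtype) ≃ₗ[ℤ]
      ZMod 2) := by
  let φ : ρ.invariants →ₗ[ℤ] ZMod 2 := (Int.castAddHom (ZMod 2)).toIntLinearMap ∘ₗ
    LinearMap.proj (.inr (.inl 0)) ∘ₗ ρ.invariants.subtype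
  have hφ (v : ρ.invariants) : φ v = ((v : C m) (.inr (.inl 0)) : ZMod 2) := rfl
  have hker : LinearMap.ker φ = (LinearMap.range ρ.norm).comap ρ.invariants.subtype := by
    ext v
    rw [LinearMap.mem_ker, hφ, ZMod.intCast_eq_zero_iff_even, Submodule.mem_comap,
      Submodule.subtype_apply, hC.mem_range_norm_iff hodd v.2]
  have hsurj : Function.Surjective φ := fun z => by
    obtain ⟨t, rfl⟩ := ZMod.intCast_surjective z
    exact ⟨t • ⟨sumB m, hC.sumB_mem_invariants⟩, by simp [hφ, sumB]⟩
  exact ⟨(Submodule.quotEquivOfEq _ _ hker.symm).trans (φ.quotKerEquivOfSurjective hsurj)⟩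

end IsCAction

end DihedralLattice

theorem stmt_6_general (m : ℕ) [NeZero m] (hodd : Odd m)
    (ρC : Representation ℤ (DihedralGroup m) ((ZMod m ⊕ ZMod m ⊕ Unit) → ℤ))
    (hxa : ∀ i : ZMod m, ρC (DihedralGroup.r 1) (Pi.single (Sum.inl i) 1) =
      Pi.single (Sum.inl (i + 1)) 1)
    (hxb : ∀ i : ZMod m, ρC (DihedralGroup.r 1) (Pi.single (Sum.inr (Sum.inl i)) 1) =
      Pi.single (Sum.inr (Sum.inl (i + 1))) 1)
    (hxc : ρC (DihedralGroup.r 1) (Pi.single (Sum.inr (Sum.inr ())) 1) =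
      Pi.single (Sum.inr (Sum.inr ())) 1)
    (hya : ∀ i : ZMod m, ρC (DihedralGroup.sr 0) (Pi.single (Sum.inl i) 1) =
      Pi.single (Sum.inl (-i)) 1)
    (hyb : ∀ i : ZMod m, ρC (DihedralGroup.sr 0) (Pi.single (Sum.inr (Sum.inl i)) 1) =
      Pi.single (Sum.inr (Sum.inl (1 - i))) 1)
    (hyc : ρC (DihedralGroup.sr 0) (Pi.single (Sum.inr (Sum.inr ())) 1) =
      (∑ i : ZMod m, Pi.single (Sum.inl i) 1) - Pi.single (Sum.inr (Sum.inr ())) 1)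
    (F : Submodule ℤ ((ZMod m ⊕ ZMod m ⊕ Unit) → ℤ))
    (hF : F = ⨅ g : DihedralGroup m, LinearMap.ker (ρC g - LinearMap.id))
    (N : ((ZMod m ⊕ ZMod m ⊕ Unit) → ℤ) →ₗ[ℤ] ((ZMod m ⊕ ZMod m ⊕ Unit) → ℤ))
    (hN : N = ∑ g : DihedralGroup m, ρC g) :
    Nonempty ((↥F ⧸ Submodule.comap F.subtype (LinearMap.range N)) ≃ₗ[ℤ] ZMod 2) := by
  have hC : DihedralLattice.IsCAction m ρC := ⟨hxa, hxb, hxc, hya, hyb, hyc⟩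
  subst hF hN
  rw [ρC.iInf_ker_sub_id_eq_invariants]
  exact hC.nonempty_quotient_equiv_zmod_two hodd

/-- For `m ≥ 3` odd, the zeroth Tate cohomology `Ĥ⁰(D_m, C) = C^{D_m}/N_{D_m}(C)`
of the rank-`(2m+1)` lattice `C` (basis `a_i, b_i, c₁` with the dihedral action of the
main construction) is isomorphic to `ℤ/2ℤ`. -/
theorem stmt_6 (m : ℕ) [NeZero m] (hm : 3 ≤ m) (hodd : Odd m)
    (ρC : Representation ℤ (DihedralGroup m) ((ZMod m ⊕ ZMod m ⊕ Unit) → ℤ))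
    (hxa : ∀ i : ZMod m, ρC (DihedralGroup.r 1) (Pi.single (Sum.inl i) 1) =
      Pi.single (Sum.inl (i + 1)) 1)
    (hxb : ∀ i : ZMod m, ρC (DihedralGroup.r 1) (Pi.single (Sum.inr (Sum.inl i)) 1) =
      Pi.single (Sum.inr (Sum.inl (i + 1))) 1)
    (hxc : ρC (DihedralGroup.r 1) (Pi.single (Sum.inr (Sum.inr ())) 1) =
      Pi.single (Sum.inr (Sum.inr ())) 1)
    (hya : ∀ i : ZMod m, ρC (DihedralGroup.sr 0) (Pi.single (Sum.inl i) 1) =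
      Pi.single (Sum.inl (-i)) 1)
    (hyb : ∀ i : ZMod m, ρC (DihedralGroup.sr 0) (Pi.single (Sum.inr (Sum.inl i)) 1) =
      Pi.single (Sum.inr (Sum.inl (1 - i))) 1)
    (hyc : ρC (DihedralGroup.sr 0) (Pi.single (Sum.inr (Sum.inr ())) 1) =
      (∑ i : ZMod m, Pi.single (Sum.inl i) 1) - Pi.single (Sum.inr (Sum.inr ())) 1)
    (F : Submodule ℤ ((ZMod m ⊕ ZMod m ⊕ Unit) → ℤ))
    (hF : F = ⨅ g : DihedralGroup m, LinearMap.ker (ρC g - LinearMap.id))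
    (N : ((ZMod m ⊕ ZMod m ⊕ Unit) → ℤ) →ₗ[ℤ] ((ZMod m ⊕ ZMod m ⊕ Unit) → ℤ))
    (hN : N = ∑ g : DihedralGroup m, ρC g) :
    Nonempty ((↥F ⧸ Submodule.comap F.subtype (LinearMap.range N)) ≃ₗ[ℤ] ZMod 2) :=
  stmt_6_general m hodd ρC hxa hxb hxc hya hyb hyc F hF N hN
end

section
/- Let $m \geq 3$ be odd and $C$ the rank-$(2m+1)$ $D_m$-lattice with $\widehat{H}^0(D_m, C) \cong \mathbb{Z}/2\mathbb{Z}$ and $C \oplus \mathbb{Z} \cong \mathbb{Z}[D_m/\langle x^2y\rangle] \oplus \mathbb{Z}[D_m/\langle xy\rangle] \oplus \mathbb{Z}[D_m/\langle x\rangle]$. Then $C$ is not a permutation $D_m$-lattice. -/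
/-! A `ℤ`-basis `b` of `M` permuted by `D_m` makes `M ≅ ℤ[ι]` for a `D_m`-set `ι`. The coefficient
at `j` of any norm `N x` is `∑ g, x (g • j)`, hence divisible by `|Stab j|`. Since `Ĥ⁰ ≅ ℤ/2`, twice
the orbit sum of `b j` (an invariant with coefficient `1` at `j`) is a norm, so `|Stab j| ∣ 2`.
Then every orbit has size divisible by `m`, so `m ∣ |ι| = 2m + 1`, which is absurd for `m ≥ 3`. -/

open MulAction

theorem MulAction.natCard_orbit_mul_natCard_stabilizer {G X : Type*} [Group G] [MulAction G X]
    (j : X) : Nat.card (orbit G j) * Nat.card (stabilizer G j) = Nat.card G := by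
  rw [← Nat.card_prod, Nat.card_congr (orbitProdStabilizerEquivGroup G j)]

theorem MulAction.card_fiber_smul_eq_card_stabilizer {G X : Type*} [Group G] [MulAction G X]
    (j : X) (g₀ : G) : Nat.card {g : G // g • j = g₀ • j} = Nat.card (stabilizer G j) :=
  Nat.card_congr <| Equiv.subtypeEquiv (Equiv.mulLeft g₀⁻¹) fun g => by
    simp [mul_smul, inv_smul_eq_iff]

theorem MulAction.natCast_card_stabilizer_dvd_sum_smul {G X R : Type*} [Group G] [Fintype G]
    [MulAction G X] [CommSemiring R] (f : X → R) (j : X) :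
    (Nat.card (stabilizer G j) : R) ∣ ∑ g : G, f (g • j) := by
  classical
  rw [Finset.sum_comp f (· • j)]
  refine Finset.dvd_sum fun i hi => ?_
  obtain ⟨g₀, -, rfl⟩ := Finset.mem_image.mp hi
  rw [← Fintype.card_subtype, ← Nat.card_eq_fintype_card,
    card_fiber_smul_eq_card_stabilizer, nsmul_eq_mul]
  exact dvd_mul_right _ _

theorem MulAction.dvd_natCard_of_card_stabilizer_dvd {G X : Type*} [Group G] [Finite G]
    [MulAction G X] [Finite X] {k m : ℕ} (hG : Nat.card G = k * m)
    (hstab : ∀ x : X, Nat.card (stabilizer G x) ∣ k) : m ∣ Nat.card X := by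
  have horbit (x : X) : m ∣ Nat.card (orbit G x) := by
    obtain ⟨t, ht⟩ := hstab x
    have hpos : 0 < Nat.card (stabilizer G x) := Nat.card_pos
    refine ⟨t, Nat.eq_of_mul_eq_mul_right hpos ?_⟩
    rw [natCard_orbit_mul_natCard_stabilizer, hG, ht]
    ring
  classical
  have := Fintype.ofFinite X
  rw [Nat.card_congr (selfEquivSigmaOrbits G X), Nat.card_sigma]
  exact Finset.dvd_sum fun ω _ => horbit ω.out

theorem Submodule.smul_mem_of_quotient_equiv_zmod {M : Type*} [AddCommGroup M]
    {F P : Submodule ℤ M} {n : ℕ} (e : letI := F.module; (F ⧸ P.comap F.subtype) ≃ₗ[ℤ] ZMod n)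
    {v : M} (hv : v ∈ F) : (n : ℤ) • v ∈ P := by
  have h : (n : ℤ) • Submodule.Quotient.mk (p := P.comap F.subtype) ⟨v, hv⟩ = 0 :=
    e.injective <| by
      rw [map_smul, map_zero, zsmul_eq_mul, Int.cast_natCast, ZMod.natCast_self, zero_mul]
  rw [← Submodule.Quotient.mk_smul, Submodule.Quotient.mk_eq_zero] at h
  exact h

namespace Representation

variable {R G M ι : Type*} [CommRing R] [Group G] [AddCommGroup M] [Module R M]

theorem exists_mulAction_of_basis_perm [Nontrivial R] (ρ : Representation R G M)
    (b : Module.Basis ι R M) (h : ∀ g i, ∃ j, ρ g (b i) = b j) :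
    ∃ _ : MulAction G ι, ∀ g i, ρ g (b i) = b (g • i) := by
  choose σ hσ using h
  have hσ_one (i : ι) : σ 1 i = i := b.injective <| by rw [← hσ, map_one]; rfl
  have hσ_mul (g h : G) (i : ι) : σ (g * h) i = σ g (σ h i) :=
    b.injective <| by rw [← hσ, ← hσ, ← hσ, map_mul]; rfl
  exact ⟨{ smul := σ, one_smul := hσ_one, mul_smul := hσ_mul }, hσ⟩

variable [MulAction G ι] {ρ : Representation R G M} {b : Module.Basis ι R M}

theorem repr_apply_of_basis_perm (hb : ∀ g i, ρ g (b i) = b (g • i)) (g : G) (x : M) (j : ι) :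
    b.repr (ρ g x) j = b.repr x (g⁻¹ • j) := by
  classical
  have h : b.coord j ∘ₗ ρ g = b.coord (g⁻¹ • j) := b.ext fun i => by
    simp only [LinearMap.comp_apply, Module.Basis.coord_apply, hb, Module.Basis.repr_self,
      Finsupp.single_apply, eq_inv_smul_iff]
  exact LinearMap.congr_fun h x

theorem sum_orbit_mem_invariants (hb : ∀ g i, ρ g (b i) = b (g • i)) (j : ι)
    [Fintype (orbit G j)] : ∑ i : orbit G j, b i ∈ ρ.invariants := fun g => by
  rw [map_sum]
  exact Fintype.sum_equiv (MulAction.toPerm g) _ _ fun i => hb g i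

theorem repr_sum_orbit_self (j : ι) [Fintype (orbit G j)] :
    b.repr (∑ i : orbit G j, b i) j = 1 := by
  classical
  rw [map_sum, Finsupp.coe_finsetSum, Finset.sum_apply,
    Fintype.sum_eq_single ⟨j, mem_orbit_self j⟩ fun i hi => ?_]
  · simp
  · rw [b.repr_self, Finsupp.single_eq_of_ne]
    exact fun h => hi (Subtype.ext h.symm)

variable [Fintype G]

theorem repr_norm_apply_of_basis_perm (hb : ∀ g i, ρ g (b i) = b (g • i)) (x : M) (j : ι) :
    b.repr (ρ.norm x) j = ∑ g : G, b.repr x (g • j) := by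
  simp only [norm, LinearMap.sum_apply, map_sum, Finsupp.coe_finsetSum, Finset.sum_apply,
    repr_apply_of_basis_perm hb]
  exact Fintype.sum_equiv (Equiv.inv G) _ _ fun g => rfl

theorem natCast_card_stabilizer_dvd_of_smul_mem_range_norm
    (hb : ∀ g i, ρ g (b i) = b (g • i)) {k : R}
    (hk : ∀ v ∈ ρ.invariants, k • v ∈ LinearMap.range ρ.norm) (j : ι) :
    (Nat.card (stabilizer G j) : R) ∣ k := by
  classical
  have : Fintype (orbit G j) := Set.fintypeRange _
  obtain ⟨x, hx⟩ := hk _ (sum_orbit_mem_invariants hb j)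
  have hcoeff := congr_arg (b.repr · j) hx
  simp only [map_smul, Finsupp.smul_apply, repr_sum_orbit_self, smul_eq_mul, mul_one,
    repr_norm_apply_of_basis_perm hb] at hcoeff
  exact hcoeff ▸ natCast_card_stabilizer_dvd_sum_smul _ j

end Representation

open Representation in
theorem stmt_7_general (m : ℕ) [NeZero m] (hm : 3 ≤ m)
    (M : Type) [AddCommGroup M] [Module ℤ M] [Module.Finite ℤ M]
    (ρ : Representation ℤ (DihedralGroup m) M)
    (hrank : Module.finrank ℤ M = 2 * m + 1)
    (F : Submodule ℤ M)
    (hF : F = ⨅ g : DihedralGroup m, LinearMap.ker (ρ g - LinearMap.id))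
    (N : M →ₗ[ℤ] M) (hN : N = ∑ g : DihedralGroup m, ρ g)
    (htate : letI := F.module;
      Nonempty ((↥F ⧸ Submodule.comap F.subtype (LinearMap.range N)) ≃ₗ[ℤ] ZMod 2)) :
    ¬ ∃ (ι : Type) (b : Module.Basis ι ℤ M),
        ∀ (g : DihedralGroup m) (i : ι), ∃ j : ι, ρ g (b i) = b j := by
  rintro ⟨ι, b, hperm⟩
  -- so that the module action of `ℤ` on `M` is syntactically `zsmul`
  obtain rfl : ‹Module ℤ M› = AddCommGroup.toIntModule M := Subsingleton.elim _ _
  obtain ⟨_, hb⟩ := exists_mulAction_of_basis_perm ρ b hperm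
  have hF_eq : F = ρ.invariants := by
    ext v
    simp [hF, sub_eq_zero]
  subst hN
  have hstab (j : ι) : Nat.card (stabilizer (DihedralGroup m) j) ∣ 2 :=
    Int.natCast_dvd_natCast.mp <| natCast_card_stabilizer_dvd_of_smul_mem_range_norm hb
      (fun v hv => Submodule.smul_mem_of_quotient_equiv_zmod htate.some (hF_eq ▸ hv)) j
  have := Module.Finite.finite_basis b
  have hdvd := dvd_natCard_of_card_stabilizer_dvd DihedralGroup.nat_card hstab
  rw [← Module.finrank_eq_nat_card_basis b, hrank] at hdvd
  have := Nat.le_of_dvd one_pos ((Nat.dvd_add_right (dvd_mul_left m 2)).mp hdvd)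
  omega

/-- For `m ≥ 3` odd, a `D_m`-lattice `M` of `ℤ`-rank `2m+1` with
`Ĥ⁰(D_m, M) ≅ ℤ/2ℤ` and `M ⊕ ℤ ≅ ℤ[D_m/⟨x²y⟩] ⊕ ℤ[D_m/⟨xy⟩] ⊕ ℤ[D_m/⟨x⟩]`
is not a permutation `D_m`-lattice (it has no `ℤ`-basis permuted by `D_m`). -/
theorem stmt_7 (m : ℕ) [NeZero m] (hm : 3 ≤ m) (hodd : Odd m)
    (M : Type) [AddCommGroup M] [Module ℤ M] [Module.Free ℤ M] [Module.Finite ℤ M]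
    (ρ : Representation ℤ (DihedralGroup m) M)
    (hrank : Module.finrank ℤ M = 2 * m + 1)
    (F : Submodule ℤ M)
    (hF : F = ⨅ g : DihedralGroup m, LinearMap.ker (ρ g - LinearMap.id))
    (N : M →ₗ[ℤ] M) (hN : N = ∑ g : DihedralGroup m, ρ g)
    (htate : letI := F.module;
      Nonempty ((↥F ⧸ Submodule.comap F.subtype (LinearMap.range N)) ≃ₗ[ℤ] ZMod 2))
    (hstab : ∃ e : (M × ℤ) ≃ₗ[ℤ]
      (((DihedralGroup m ⧸
          Subgroup.zpowers (DihedralGroup.r 1 ^ 2 * DihedralGroup.sr 0)) →₀ ℤ) ×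
        ((DihedralGroup m ⧸
          Subgroup.zpowers (DihedralGroup.r 1 * DihedralGroup.sr 0)) →₀ ℤ) ×
        ((DihedralGroup m ⧸ Subgroup.zpowers (DihedralGroup.r 1)) →₀ ℤ)),
      ∀ (g : DihedralGroup m) (v : M × ℤ),
        e (ρ g v.1, v.2) =
          ((Representation.ofMulAction ℤ (DihedralGroup m)
            (DihedralGroup m ⧸
              Subgroup.zpowers (DihedralGroup.r 1 ^ 2 * DihedralGroup.sr 0)) g
              (MonoidAlgebra.ofCoeff (e v).1)).coeff,
           (Representation.ofMulAction ℤ (DihedralGroup m)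
            (DihedralGroup m ⧸
              Subgroup.zpowers (DihedralGroup.r 1 * DihedralGroup.sr 0)) g
              (MonoidAlgebra.ofCoeff (e v).2.1)).coeff,
           (Representation.ofMulAction ℤ (DihedralGroup m)
            (DihedralGroup m ⧸ Subgroup.zpowers (DihedralGroup.r 1)) g
              (MonoidAlgebra.ofCoeff (e v).2.2)).coeff)) :
    ¬ ∃ (ι : Type) (b : Module.Basis ι ℤ M),
        ∀ (g : DihedralGroup m) (i : ι), ∃ j : ι, ρ g (b i) = b j :=
  stmt_7_general m hm M ρ hrank F hF N hN htate
end

section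
/- Let $n \geq 3$ be odd and $G = D_n = \langle x, y \mid x^n = y^2 = 1, y^{-1}xy = x^{-1}\rangle$. Let $I_G \subset \mathbb{Z}[G]$ be the augmentation ideal (kernel of $\mathbb{Z}[G] \to \mathbb{Z}$). Define $\varphi : \mathbb{Z}[G] \oplus \mathbb{Z}[G] \to I_G$ on the two regular representation copies (with bases $\{\alpha_g\}$ and $\{\beta_g\}$ indexed via a fixed enumeration $e_1,\ldots,e_{2n}$ of group elements as in the regular representation) by $\varphi(\alpha_i) = f_i$, $\varphi(\beta_i) = -f_i$, where $f_i = e_i - e_{i+1}$ (indices mod $2n$). Then $\varphi$ is a surjective $G$-homomorphism, and its kernel $C$ is free of $\mathbb{Z}$-rank $2n+1$ with basis $a_i = \alpha_i + \beta_i$ ($1 \leq i \leq 2n$) and $b_1 = \sum_{i=1}^{2n} \alpha_i$. -/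
private lemma pi_single_smul_aux {ι : Type*} [DecidableEq ι] (s : ι) (x : ℤ) :
    (Pi.single s x : ι → ℤ) = x • Pi.single s 1 := by
  ext u
  by_cases hu : u = s <;> simp [Pi.single_apply, hu]

private lemma pi_eq_sum_aux {ι : Type*} [Fintype ι] [DecidableEq ι] (w : ι → ℤ) :
    w = ∑ i, w i • (Pi.single i 1 : ι → ℤ) := by
  conv_lhs => rw [← Finset.univ_sum_single w]
  exact Finset.sum_congr rfl fun i _ => pi_single_smul_aux i (w i)

private lemma lin_ext_aux {ι : Type*} [Fintype ι] [DecidableEq ι] {M : Type*}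
    [AddCommGroup M] [Module ℤ M] (L1 L2 : (ι → ℤ) →ₗ[ℤ] M)
    (h : ∀ i, L1 (Pi.single i 1) = L2 (Pi.single i 1)) : L1 = L2 := by
  apply LinearMap.pi_ext
  intro i x
  rw [pi_single_smul_aux, LinearMap.map_smul, LinearMap.map_smul, h]

/-- For `n ≥ 3` odd and `G = D_n`, the map `φ : ℤ[G] ⊕ ℤ[G] → I_G`,
`φ(α_i) = f_i`, `φ(β_i) = -f_i` (with the enumeration `e_1, …, e_{2n}` of the regular
representation, `x : e_i ↦ e_{i+2}`, `y : e_i ↦ e_{1-i}` on indices mod `2n`,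
`f_i = e_i - e_{i+1}`) is a surjective `G`-homomorphism whose kernel `C` is free of
`ℤ`-rank `2n+1` with basis `a_i = α_i + β_i` and `b_1 = Σ α_i`. -/
theorem stmt_10 (n : ℕ) (hn : 3 ≤ n) (hodd : Odd n)
    (ρP : Representation ℤ (DihedralGroup n) ((ZMod (2 * n) ⊕ ZMod (2 * n)) → ℤ))
    (ρE : Representation ℤ (DihedralGroup n) (ZMod (2 * n) → ℤ))
    (f : ZMod (2 * n) → (ZMod (2 * n) → ℤ))
    (hf : ∀ i, f i = Pi.single i 1 - Pi.single (i + 1) 1)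
    (hEx : ∀ i, ρE (DihedralGroup.r 1) (Pi.single i 1) = Pi.single (i + 2) 1)
    (hEy : ∀ i, ρE (DihedralGroup.sr 0) (Pi.single i 1) = Pi.single (1 - i) 1)
    (hPxa : ∀ i : ZMod (2 * n), ρP (DihedralGroup.r 1) (Pi.single (Sum.inl i) 1) =
      Pi.single (Sum.inl (i + 2)) 1)
    (hPxb : ∀ i : ZMod (2 * n), ρP (DihedralGroup.r 1) (Pi.single (Sum.inr i) 1) =
      Pi.single (Sum.inr (i + 2)) 1)
    (hPya : ∀ i : ZMod (2 * n), ρP (DihedralGroup.sr 0) (Pi.single (Sum.inl i) 1) =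
      Pi.single (Sum.inr (-i)) 1)
    (hPyb : ∀ i : ZMod (2 * n), ρP (DihedralGroup.sr 0) (Pi.single (Sum.inr i) 1) =
      Pi.single (Sum.inl (-i)) 1)
    (φ : ((ZMod (2 * n) ⊕ ZMod (2 * n)) → ℤ) →ₗ[ℤ] (ZMod (2 * n) → ℤ))
    (hφa : ∀ i : ZMod (2 * n), φ (Pi.single (Sum.inl i) 1) = f i)
    (hφb : ∀ i : ZMod (2 * n), φ (Pi.single (Sum.inr i) 1) = -f i) :
    haveI : NeZero (2 * n) := ⟨by omega⟩
    (∀ (g : DihedralGroup n) (w : (ZMod (2 * n) ⊕ ZMod (2 * n)) → ℤ),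
        φ (ρP g w) = ρE g (φ w)) ∧
    LinearMap.range φ = Submodule.span ℤ (Set.range f) ∧
    ∀ B : (ZMod (2 * n) ⊕ Unit) → ((ZMod (2 * n) ⊕ ZMod (2 * n)) → ℤ),
      (∀ i : ZMod (2 * n), B (Sum.inl i) =
        Pi.single (Sum.inl i) 1 + Pi.single (Sum.inr i) 1) →
      (B (Sum.inr ()) = ∑ i : ZMod (2 * n), Pi.single (Sum.inl i) 1) →
      (∀ t, φ (B t) = 0) ∧ LinearIndependent ℤ B ∧
        Submodule.span ℤ (Set.range B) = LinearMap.ker φ ∧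
        Module.finrank ℤ ↥(LinearMap.ker φ) = 2 * n + 1 := by
  haveI : NeZero (2 * n) := ⟨by omega⟩
  haveI : NeZero n := ⟨by omega⟩
  -- Part 1: equivariance
  have comm_mul : ∀ g h : DihedralGroup n,
      (∀ w, φ (ρP g w) = ρE g (φ w)) → (∀ w, φ (ρP h w) = ρE h (φ w)) →
      ∀ w, φ (ρP (g * h) w) = ρE (g * h) (φ w) := by
    intro g h hg hh w
    simp only [map_mul, Module.End.mul_apply, hg, hh]
  have comm_one : ∀ w, φ (ρP 1 w) = ρE 1 (φ w) := by
    intro w; simp only [map_one, Module.End.one_apply]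
  have comm_r1 : ∀ w, φ (ρP (DihedralGroup.r 1) w) = ρE (DihedralGroup.r 1) (φ w) := by
    have key : φ ∘ₗ (ρP (DihedralGroup.r 1)) = (ρE (DihedralGroup.r 1)) ∘ₗ φ := by
      apply lin_ext_aux
      rintro (i | i)
      · rw [LinearMap.comp_apply, LinearMap.comp_apply, hPxa, hφa, hφa, hf, hf, map_sub,
          hEx, hEx]
        have : i + 1 + 2 = i + 2 + 1 := by ring
        rw [this]
      · rw [LinearMap.comp_apply, LinearMap.comp_apply, hPxb, hφb, hφb, hf, hf, map_neg,
          map_sub, hEx, hEx]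
        have : i + 1 + 2 = i + 2 + 1 := by ring
        rw [this]
    intro w
    exact LinearMap.congr_fun key w
  have comm_sr0 : ∀ w, φ (ρP (DihedralGroup.sr 0) w) = ρE (DihedralGroup.sr 0) (φ w) := by
    have key : φ ∘ₗ (ρP (DihedralGroup.sr 0)) = (ρE (DihedralGroup.sr 0)) ∘ₗ φ := by
      apply lin_ext_aux
      rintro (i | i)
      · rw [LinearMap.comp_apply, LinearMap.comp_apply, hPya, hφb, hφa, hf, hf, map_sub,
          hEy, hEy]
        have e1 : -i + 1 = 1 - i := by ring
        have e2 : (1 : ZMod (2 * n)) - (i + 1) = -i := by ring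
        rw [e1, e2, neg_sub]
      · rw [LinearMap.comp_apply, LinearMap.comp_apply, hPyb, hφa, hφb, hf, hf, map_neg,
          map_sub, hEy, hEy]
        have e1 : -i + 1 = 1 - i := by ring
        have e2 : (1 : ZMod (2 * n)) - (i + 1) = -i := by ring
        rw [e1, e2, neg_sub]
    intro w
    exact LinearMap.congr_fun key w
  have comm_rnat : ∀ k : ℕ, ∀ w,
      φ (ρP (DihedralGroup.r (k : ZMod n)) w) = ρE (DihedralGroup.r (k : ZMod n)) (φ w) := by
    intro k
    induction k with
    | zero =>
      intro w
      rw [Nat.cast_zero, ← DihedralGroup.one_def]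
      exact comm_one w
    | succ k ih =>
      have : DihedralGroup.r ((k + 1 : ℕ) : ZMod n) =
          DihedralGroup.r (k : ZMod n) * DihedralGroup.r 1 := by
        rw [DihedralGroup.r_mul_r]; push_cast; ring_nf
      rw [this]
      exact comm_mul _ _ ih comm_r1
  have comm_r : ∀ i : ZMod n, ∀ w,
      φ (ρP (DihedralGroup.r i) w) = ρE (DihedralGroup.r i) (φ w) := by
    intro i
    have : DihedralGroup.r i = DihedralGroup.r ((i.val : ℕ) : ZMod n) := by
      rw [ZMod.natCast_val, ZMod.cast_id]
    rw [this]
    exact comm_rnat i.val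
  have part1 : ∀ (g : DihedralGroup n) (w : (ZMod (2 * n) ⊕ ZMod (2 * n)) → ℤ),
      φ (ρP g w) = ρE g (φ w) := by
    intro g
    cases g with
    | r i => exact comm_r i
    | sr i =>
      have : DihedralGroup.sr i = DihedralGroup.sr 0 * DihedralGroup.r i := by
        rw [DihedralGroup.sr_mul_r, zero_add]
      rw [this]
      exact comm_mul _ _ comm_sr0 (comm_r i)
  -- Part 2: range
  have part2 : LinearMap.range φ = Submodule.span ℤ (Set.range f) := by
    apply le_antisymm
    · rintro _ ⟨w, rfl⟩
      have hw : φ w = ∑ s, w s • φ (Pi.single s 1) := by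
        conv_lhs => rw [pi_eq_sum_aux w]
        rw [map_sum]
        exact Finset.sum_congr rfl fun s _ => map_smul φ _ _
      rw [hw]
      apply Submodule.sum_mem
      rintro (i | i) -
      · rw [hφa]
        exact Submodule.smul_mem _ _ (Submodule.subset_span ⟨i, rfl⟩)
      · rw [hφb]
        exact Submodule.smul_mem _ _ (Submodule.neg_mem _ (Submodule.subset_span ⟨i, rfl⟩))
    · rw [Submodule.span_le]
      rintro _ ⟨i, rfl⟩
      exact ⟨Pi.single (Sum.inl i) 1, hφa i⟩
  refine ⟨part1, part2, ?_⟩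
  intro B hBl hBr
  have hB0 : ∀ t, φ (B t) = 0 := by
    rintro (i | ⟨⟩)
    · rw [hBl, map_add, hφa, hφb, add_neg_cancel]
    · rw [hBr, map_sum]
      simp_rw [hφa, hf]
      rw [Finset.sum_sub_distrib, sub_eq_zero]
      exact (Fintype.sum_equiv (Equiv.addRight (1 : ZMod (2 * n))) _ _ (fun i => rfl)).symm
  -- evaluation lemmas
  have eval_inr : ∀ (c : ZMod (2 * n) ⊕ Unit → ℤ) (j : ZMod (2 * n)),
      (∑ t, c t • B t) (Sum.inr j) = c (Sum.inl j) := by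
    intro c j
    rw [Finset.sum_apply, Fintype.sum_sum_type]
    simp [hBl, hBr, Pi.single_apply, mul_ite, Finset.sum_ite_eq]
  have eval_inl : ∀ (c : ZMod (2 * n) ⊕ Unit → ℤ) (j : ZMod (2 * n)),
      (∑ t, c t • B t) (Sum.inl j) = c (Sum.inl j) + c (Sum.inr ()) := by
    intro c j
    rw [Finset.sum_apply, Fintype.sum_sum_type]
    simp [hBl, hBr, Pi.single_apply, mul_ite, Finset.sum_ite_eq]
  have hli : LinearIndependent ℤ B := by
    rw [Fintype.linearIndependent_iff]
    intro c hc
    have h1 : ∀ j, c (Sum.inl j) = 0 := by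
      intro j
      have := congrFun hc (Sum.inr j)
      rwa [eval_inr] at this
    have h2 : c (Sum.inr ()) = 0 := by
      have := congrFun hc (Sum.inl 0)
      rw [eval_inl, h1, Pi.zero_apply, zero_add] at this
      exact this
    rintro (j | ⟨⟩)
    exacts [h1 j, h2]
  have hker : Submodule.span ℤ (Set.range B) = LinearMap.ker φ := by
    apply le_antisymm
    · rw [Submodule.span_le]
      rintro _ ⟨t, rfl⟩
      exact LinearMap.mem_ker.mpr (hB0 t)
    · intro w hw
      rw [LinearMap.mem_ker] at hw
      set c : ZMod (2 * n) → ℤ := fun i => w (Sum.inl i) - w (Sum.inr i) with hc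
      have hsum : φ w = ∑ i, c i • f i := by
        conv_lhs => rw [pi_eq_sum_aux w]
        rw [map_sum, Fintype.sum_sum_type, ← Finset.sum_add_distrib]
        refine Finset.sum_congr rfl fun i _ => ?_
        rw [map_smul, map_smul, hφa, hφb, hc]
        simp only [smul_neg, sub_smul]
        ring_nf
      have hφw : ∀ j, c j - c (j - 1) = 0 := by
        intro j
        have h0 : (∑ i, c i • f i) j = 0 := by rw [← hsum, hw]; rfl
        rw [Finset.sum_apply] at h0
        have hterm : ∀ i, (c i • f i) j =
            (if j = i then c i else 0) - (if j - 1 = i then c i else 0) := by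
          intro i
          rw [hf]
          simp only [Pi.smul_apply, Pi.sub_apply, Pi.single_apply, smul_eq_mul, mul_sub,
            mul_ite, mul_one, mul_zero]
          congr 1
          apply if_congr _ rfl rfl
          exact sub_eq_iff_eq_add.symm
        simp_rw [hterm] at h0
        rwa [Finset.sum_sub_distrib, Finset.sum_ite_eq, Finset.sum_ite_eq,
          if_pos (Finset.mem_univ j), if_pos (Finset.mem_univ (j - 1))] at h0
      have hstep : ∀ j, c (j + 1) = c j := by
        intro j
        have := hφw (j + 1)
        rw [sub_eq_zero] at this
        simpa using this
      have hnat : ∀ k : ℕ, c ((k : ℕ) : ZMod (2 * n)) = c 0 := by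
        intro k
        induction k with
        | zero => simp
        | succ k ih => push_cast; rw [hstep]; push_cast at ih; exact ih
      have hconst : ∀ j, c j = c 0 := by
        intro j
        have := hnat j.val
        rwa [ZMod.natCast_val, ZMod.cast_id] at this
      set d : ZMod (2 * n) ⊕ Unit → ℤ :=
        Sum.elim (fun j => w (Sum.inr j)) (fun _ => c 0) with hd
      have hwrep : w = ∑ t, d t • B t := by
        funext s
        rcases s with i | i
        · rw [eval_inl]
          have h1 : c i = c 0 := hconst i
          simp only [hd, Sum.elim_inl, Sum.elim_inr]
          rw [← h1, hc]
          ring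
        · rw [eval_inr]
          simp [hd]
      rw [hwrep]
      exact Submodule.sum_mem _ fun t _ =>
        Submodule.smul_mem _ _ (Submodule.subset_span ⟨t, rfl⟩)
  have hfr : Module.finrank ℤ ↥(LinearMap.ker φ) = 2 * n + 1 := by
    rw [← hker, finrank_span_eq_card hli]
    simp [ZMod.card]
  exact ⟨hB0, hli, hker, hfr⟩
end

section
/- Let $n \geq 3$ be odd and $G = D_n$. Let $C$ be the $G$-lattice of rank $2n+1$ with $\mathbb{Z}$-basis $a_1, \ldots, a_{2n}, b_1$ and action: $x : a_1 \mapsto a_3 \mapsto \cdots \mapsto a_{2n-1} \mapsto a_1$, $a_2 \mapsto a_4 \mapsto \cdots \mapsto a_{2n} \mapsto a_2$, $b_1 \mapsto b_1$; $y : a_i \leftrightarrow a_{2n-i}$ for $1 \leq i \leq n-1$, $a_{2n} \mapsto a_{2n}$, $b_1 \mapsto \sum_{i=1}^{2n} a_i - b_1$. Then $C \oplus \mathbb{Z}$ (trivial action on $\mathbb{Z}$) is isomorphic as a $G$-lattice to $\mathbb{Z}[G/\langle xy\rangle] \oplus \mathbb{Z}[G/\langle x^2y\rangle] \oplus \mathbb{Z}[G/\langle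 x\rangle]$; in particular $C$ is stably permutation. -/
/-!
Sending the trivial coset of `H` to an `H`-fixed vector gives a `G`-map `ℤ[G/H] → C ⊕ ℤ`. Here
`⟨xy⟩` fixes `(a₁, 1)`, `⟨x²y⟩` fixes `(a₂, 0)` and `⟨x⟩` fixes `(b₁, q)` with `2q = n + 1`.
The images span `C ⊕ ℤ`: the orbits of the first two vectors are the `(a_{2k+1}, 1)` and the
`(a_{2k+2}, 0)`, while `y` sends `(b₁, q)` to `(Σ aᵢ - b₁, q)`, so
`(0, 1) = (b₁, q) + y(b₁, q) - Σₖ (a_{2k+1}, 1) - Σₖ (a_{2k+2}, 0)` because `2q - n = 1`.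
Both sides are free of rank `2n + 2`, so the resulting surjection is an isomorphism.
-/

open Finset DihedralGroup

namespace Representation

variable {k G V : Type*} [CommSemiring k] [Group G] [AddCommMonoid V] [Module k V]
  (ρ : Representation k G V)

lemma apply_eq_self_of_mem_zpowers {g h : G} {v : V} (hv : ρ g v = v)
    (hh : h ∈ Subgroup.zpowers g) : ρ h v = v := by
  have hinv : ρ g⁻¹ v = v := by
    conv_lhs => rw [← hv, ← Module.End.mul_apply, ← map_mul, inv_mul_cancel, map_one]
    rfl
  obtain ⟨m, rfl⟩ := Subgroup.mem_zpowers_iff.mp hh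
  clear hh
  induction m using Int.induction_on with
  | zero => simp
  | succ m ih => rw [zpow_add_one, map_mul, Module.End.mul_apply, hv, ih]
  | pred m ih => rw [zpow_sub_one, map_mul, Module.End.mul_apply, hinv, ih]

lemma coeff_ofMulAction_ofCoeff {X : Type*} [MulAction G X] (g : G) (f : X →₀ k) :
    (ofMulAction k G X g (MonoidAlgebra.ofCoeff f)).coeff = f.mapDomain (g • ·) :=
  rfl

variable (H : Subgroup G) {v : V}

noncomputable def cosetLift (hv : ∀ h ∈ H, ρ h v = v) : (G ⧸ H →₀ k) →ₗ[k] V :=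
  Finsupp.linearCombination k fun c => Quotient.liftOn' c (fun g => ρ g v) fun a b hab => by
    rw [← mul_inv_cancel_left a b, map_mul, Module.End.mul_apply,
      hv _ (QuotientGroup.leftRel_apply.mp hab)]

variable {ρ H}

@[simp]
lemma cosetLift_single (hv : ∀ h ∈ H, ρ h v = v) (g : G) (c : k) :
    cosetLift ρ H hv (Finsupp.single (g : G ⧸ H) c) = c • ρ g v :=
  Finsupp.linearCombination_single k c _

lemma mem_range_cosetLift (hv : ∀ h ∈ H, ρ h v = v) (g : G) :
    ρ g v ∈ LinearMap.range (cosetLift ρ H hv) :=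
  ⟨Finsupp.single (g : G ⧸ H) 1, by rw [cosetLift_single, one_smul]⟩

lemma cosetLift_mapDomain_smul (hv : ∀ h ∈ H, ρ h v = v) (g : G) (f : G ⧸ H →₀ k) :
    cosetLift ρ H hv (f.mapDomain (g • ·)) = ρ g (cosetLift ρ H hv f) := by
  induction f using Finsupp.induction_linear with
  | zero => simp
  | add f₁ f₂ h₁ h₂ => rw [Finsupp.mapDomain_add, map_add, h₁, h₂, map_add, map_add]
  | single c a =>
    induction c using QuotientGroup.induction_on with
    | H x =>
      rw [Finsupp.mapDomain_single, MulAction.Quotient.smul_mk, smul_eq_mul, cosetLift_single,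
        cosetLift_single, map_smul, map_mul, Module.End.mul_apply]

end Representation

lemma LinearMap.bijective_of_surjective_of_finrank_eq {R M N : Type*} [CommRing R]
    [Nontrivial R] [AddCommGroup M] [Module R M] [Module.Free R M] [Module.Finite R M]
    [AddCommGroup N] [Module R N] [Module.Free R N] [Module.Finite R N]
    (f : M →ₗ[R] N) (hf : Function.Surjective f)
    (h : Module.finrank R M = Module.finrank R N) : Function.Bijective f :=
  OrzechProperty.bijective_of_surjective_of_injective
    (LinearEquiv.ofFinrankEq M N h).toLinearMap f (LinearEquiv.injective _) hf

lemma Subgroup.finrank_finsupp_quotient {R G : Type*} [CommRing R] [StrongRankCondition R]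
    [Group G] (H : Subgroup G) [H.FiniteIndex] :
    Module.finrank R (G ⧸ H →₀ R) = H.index := by
  have := H.fintypeQuotientOfFiniteIndex
  rw [Module.finrank_finsupp_self, Fintype.card_eq_nat_card]
  rfl

lemma Finset.sum_range_two_mul {M : Type*} [AddCommMonoid M] (f : ℕ → M) (n : ℕ) :
    ∑ m ∈ range (2 * n), f m = ∑ k ∈ range n, (f (2 * k) + f (2 * k + 1)) := by
  induction n with
  | zero => simp
  | succ n ih => rw [Nat.mul_succ, sum_range_succ, sum_range_succ, sum_range_succ, ih, add_assoc]

namespace ZMod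

lemma sum_eq_sum_range {M : Type*} [AddCommMonoid M] (m : ℕ) [NeZero m] (f : ZMod m → M) :
    ∑ i, f i = ∑ k ∈ range m, f k :=
  Finset.sum_nbij' val (fun k => k) (fun i _ => by simpa using val_lt i)
    (fun _ _ => mem_univ _) (fun i _ => natCast_zmod_val i)
    (fun _ hk => val_cast_of_lt (mem_range.mp hk)) (fun _ _ => by simp)

lemma sum_two_mul {M : Type*} [AddCommMonoid M] (n : ℕ) [NeZero (2 * n)]
    (f : ZMod (2 * n) → M) :
    ∑ i, f i = ∑ k ∈ range n, (f (2 * k + 1) + f (2 * k + 2)) := by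
  calc ∑ i, f i = ∑ i, f (i + 1) := (Fintype.sum_equiv (Equiv.addRight 1) _ _ fun _ => rfl).symm
    _ = ∑ m ∈ range (2 * n), f (m + 1) := sum_eq_sum_range _ _
    _ = _ := by
      rw [Finset.sum_range_two_mul]
      push_cast
      simp only [add_assoc, one_add_one_eq_two]

lemma exists_eq_two_mul_add_one_or_two_mul_add_two {m : ℕ} [NeZero m] (i : ZMod m) :
    ∃ k : ℕ, i = 2 * k + 1 ∨ i = 2 * k + 2 := by
  have hi : i = ((i - 1).val : ZMod m) + 1 := by rw [natCast_zmod_val, sub_add_cancel]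
  obtain ⟨k, hk | hk⟩ := Nat.even_or_odd' (i - 1).val
  · exact ⟨k, Or.inl (by rw [hi, hk]; push_cast; ring)⟩
  · exact ⟨k, Or.inr (by rw [hi, hk]; push_cast; ring)⟩

end ZMod

namespace DihedralGroup

lemma index_zpowers_sr {n : ℕ} (i : ZMod n) : (Subgroup.zpowers (sr i)).index = n := by
  have h := (Subgroup.zpowers (sr i)).index_mul_card
  rw [Nat.card_zpowers, orderOf_sr, nat_card] at h
  omega

lemma index_zpowers_r_one (n : ℕ) [NeZero n] :
    (Subgroup.zpowers (r 1 : DihedralGroup n)).index = 2 := by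
  have h := (Subgroup.zpowers (r 1 : DihedralGroup n)).index_mul_card
  rw [Nat.card_zpowers, orderOf_r_one, nat_card] at h
  exact Nat.eq_of_mul_eq_mul_right (NeZero.pos n) (by rw [h, mul_comm])

lemma finrank_finsupp_quotients (R : Type*) [CommRing R] [StrongRankCondition R]
    (n : ℕ) [NeZero n] :
    Module.finrank R (((DihedralGroup n ⧸ Subgroup.zpowers (r 1 * sr 0)) →₀ R) ×
      ((DihedralGroup n ⧸ Subgroup.zpowers (r 1 ^ 2 * sr 0)) →₀ R) ×
      ((DihedralGroup n ⧸ Subgroup.zpowers (r 1)) →₀ R)) = 2 * n + 2 := by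
  rw [Module.finrank_prod, Module.finrank_prod, Subgroup.finrank_finsupp_quotient,
    Subgroup.finrank_finsupp_quotient, Subgroup.finrank_finsupp_quotient, r_mul_sr, sq, r_mul_r,
    r_mul_sr, index_zpowers_sr, index_zpowers_sr, index_zpowers_r_one]
  ring

end DihedralGroup

lemma lattice_eq_top_of_mem {n : ℕ} [NeZero (2 * n)] {q : ℤ} (hq : 2 * q = n + 1)
    (p : Submodule ℤ (((ZMod (2 * n) ⊕ Unit) → ℤ) × ℤ))
    (h₁ : ∀ k : ℕ, (Pi.single (Sum.inl (2 * (k : ZMod (2 * n)) + 1)) 1, 1) ∈ p)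
    (h₂ : ∀ k : ℕ, (Pi.single (Sum.inl (2 * (k : ZMod (2 * n)) + 2)) 1, 0) ∈ p)
    (h₃ : (Pi.single (Sum.inr ()) 1, q) ∈ p)
    (h₄ : ((∑ i : ZMod (2 * n), Pi.single (Sum.inl i) 1) - Pi.single (Sum.inr ()) 1, q) ∈ p) :
    p = ⊤ := by
  have hT : ((0 : (ZMod (2 * n) ⊕ Unit) → ℤ), (1 : ℤ)) ∈ p := by
    convert sub_mem (sub_mem (add_mem h₃ h₄) (sum_mem fun k (_ : k ∈ range n) => h₁ k))
      (sum_mem fun k (_ : k ∈ range n) => h₂ k) using 1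
    ext1
    · simp [ZMod.sum_two_mul, sum_add_distrib, Prod.fst_sum]
    · simp only [Prod.mk_add_mk, add_sub_cancel, Prod.snd_sub, Prod.snd_sum, sum_const,
        card_range, Int.nsmul_eq_mul, mul_one]
      omega
  have ha : ∀ i, ((Pi.single (Sum.inl i) 1 : (ZMod (2 * n) ⊕ Unit) → ℤ), (0 : ℤ)) ∈ p := by
    intro i
    obtain ⟨k, rfl | rfl⟩ := i.exists_eq_two_mul_add_one_or_two_mul_add_two
    · simpa using sub_mem (h₁ k) hT
    · exact h₂ k
  have hb : ((Pi.single (Sum.inr ()) 1 : (ZMod (2 * n) ⊕ Unit) → ℤ), (0 : ℤ)) ∈ p := by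
    simpa using sub_mem h₃ (p.smul_mem q hT)
  have hC : p.comap (LinearMap.inl ℤ _ ℤ) = ⊤ := by
    rw [eq_top_iff, ← (Pi.basisFun ℤ (ZMod (2 * n) ⊕ Unit)).span_eq, Submodule.span_le]
    rintro _ ⟨i | ⟨⟩, rfl⟩
    · simpa using ha i
    · simpa using hb
  refine Submodule.eq_top_iff'.mpr fun v => ?_
  have hv₁ : (v.1, (0 : ℤ)) ∈ p := Submodule.eq_top_iff'.mp hC v.1
  convert add_mem hv₁ (p.smul_mem v.2 hT) using 1
  ext <;> simp

section Lattice

variable {n : ℕ} (ρC : Representation ℤ (DihedralGroup n) ((ZMod (2 * n) ⊕ Unit) → ℤ))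
  (hxa : ∀ i : ZMod (2 * n), ρC (r 1) (Pi.single (Sum.inl i) 1) = Pi.single (Sum.inl (i + 2)) 1)
  (hya : ∀ i : ZMod (2 * n), ρC (sr 0) (Pi.single (Sum.inl i) 1) = Pi.single (Sum.inl (-i)) 1)
  (hxb : ρC (r 1) (Pi.single (Sum.inr ()) 1) = Pi.single (Sum.inr ()) 1)

include hxa in
lemma r_one_pow_apply_single (k : ℕ) (i : ZMod (2 * n)) :
    ρC (r 1 ^ k) (Pi.single (Sum.inl i) 1) = Pi.single (Sum.inl (i + 2 * k)) 1 := by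
  induction k with
  | zero => simp
  | succ k ih =>
    rw [pow_succ', map_mul, Module.End.mul_apply, ih, hxa]
    push_cast
    ring_nf

include hxa hya in
lemma r_one_mul_sr_zero_apply_single_one :
    ρC (r 1 * sr 0) (Pi.single (Sum.inl 1) 1) = Pi.single (Sum.inl 1) 1 := by
  rw [map_mul, Module.End.mul_apply, hya, hxa]
  norm_num

include hxa hya in
lemma r_one_sq_mul_sr_zero_apply_single_two :
    ρC (r 1 ^ 2 * sr 0) (Pi.single (Sum.inl 2) 1) = Pi.single (Sum.inl 2) 1 := by
  rw [map_mul, Module.End.mul_apply, hya, r_one_pow_apply_single ρC hxa]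
  norm_num

variable [NeZero (2 * n)] (hyb : ρC (sr 0) (Pi.single (Sum.inr ()) 1) =
  (∑ i : ZMod (2 * n), Pi.single (Sum.inl i) 1) - Pi.single (Sum.inr ()) 1)

include hxa hyb in
lemma lattice_eq_top_of_orbits_mem {q : ℤ} (hq : 2 * q = n + 1)
    (p : Submodule ℤ (((ZMod (2 * n) ⊕ Unit) → ℤ) × ℤ))
    (h₁ : ∀ g, (ρC g (Pi.single (Sum.inl 1) 1), 1) ∈ p)
    (h₂ : ∀ g, (ρC g (Pi.single (Sum.inl 2) 1), 0) ∈ p)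
    (h₃ : ∀ g, (ρC g (Pi.single (Sum.inr ()) 1), q) ∈ p) :
    p = ⊤ :=
  lattice_eq_top_of_mem hq p
    (fun k => by simpa only [r_one_pow_apply_single ρC hxa, add_comm] using h₁ (r 1 ^ k))
    (fun k => by simpa only [r_one_pow_apply_single ρC hxa, add_comm] using h₂ (r 1 ^ k))
    (by simpa using h₃ 1) (by simpa [hyb] using h₃ (sr 0))

include hxa hya hxb hyb in
lemma exists_equivariant_surjection (hodd : Odd n) :
    ∃ ψ : (((DihedralGroup n ⧸ Subgroup.zpowers (r 1 * sr 0)) →₀ ℤ) ×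
        ((DihedralGroup n ⧸ Subgroup.zpowers (r 1 ^ 2 * sr 0)) →₀ ℤ) ×
        ((DihedralGroup n ⧸ Subgroup.zpowers (r 1)) →₀ ℤ)) →ₗ[ℤ] ((ZMod (2 * n) ⊕ Unit) → ℤ) × ℤ,
      Function.Surjective ψ ∧ ∀ g w,
        ψ (w.1.mapDomain (g • ·), w.2.1.mapDomain (g • ·), w.2.2.mapDomain (g • ·)) =
          (ρC g (ψ w).1, (ψ w).2) := by
  obtain ⟨q, hq⟩ : ∃ q : ℤ, 2 * q = n + 1 := by obtain ⟨k, hk⟩ := hodd; exact ⟨k + 1, by omega⟩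
  set ρ := ρC.prod (Representation.trivial ℤ (DihedralGroup n) ℤ)
  have h₁ : ∀ h ∈ Subgroup.zpowers (r 1 * sr 0),
      ρ h (Pi.single (Sum.inl 1) 1, 1) = (Pi.single (Sum.inl 1) 1, 1) := fun _ =>
    ρ.apply_eq_self_of_mem_zpowers
      (congrArg (·, _) (r_one_mul_sr_zero_apply_single_one ρC hxa hya))
  have h₂ : ∀ h ∈ Subgroup.zpowers (r 1 ^ 2 * sr 0),
      ρ h (Pi.single (Sum.inl 2) 1, 0) = (Pi.single (Sum.inl 2) 1, 0) := fun _ =>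
    ρ.apply_eq_self_of_mem_zpowers
      (congrArg (·, _) (r_one_sq_mul_sr_zero_apply_single_two ρC hxa hya))
  have h₃ : ∀ h ∈ Subgroup.zpowers (r 1),
      ρ h (Pi.single (Sum.inr ()) 1, q) = (Pi.single (Sum.inr ()) 1, q) := fun _ =>
    ρ.apply_eq_self_of_mem_zpowers (congrArg (·, _) hxb)
  refine ⟨(ρ.cosetLift _ h₁).coprod ((ρ.cosetLift _ h₂).coprod (ρ.cosetLift _ h₃)), ?_, ?_⟩
  · rw [← LinearMap.range_eq_top, LinearMap.range_coprod, LinearMap.range_coprod]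
    exact lattice_eq_top_of_orbits_mem ρC hxa hyb hq _
      (fun g => Submodule.mem_sup_left (Representation.mem_range_cosetLift h₁ g))
      (fun g => Submodule.mem_sup_right (Submodule.mem_sup_left
        (Representation.mem_range_cosetLift h₂ g)))
      (fun g => Submodule.mem_sup_right (Submodule.mem_sup_right
        (Representation.mem_range_cosetLift h₃ g)))
  · rintro g ⟨w₁, w₂, w₃⟩
    simp only [LinearMap.coprod_apply, Representation.cosetLift_mapDomain_smul, ← map_add]
    rfl

end Lattice

theorem stmt_11_general (n : ℕ) [NeZero (2 * n)] (hodd : Odd n)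
    (ρC : Representation ℤ (DihedralGroup n) ((ZMod (2 * n) ⊕ Unit) → ℤ))
    (hxa : ∀ i : ZMod (2 * n), ρC (DihedralGroup.r 1) (Pi.single (Sum.inl i) 1) =
      Pi.single (Sum.inl (i + 2)) 1)
    (hxb : ρC (DihedralGroup.r 1) (Pi.single (Sum.inr ()) 1) = Pi.single (Sum.inr ()) 1)
    (hya : ∀ i : ZMod (2 * n), ρC (DihedralGroup.sr 0) (Pi.single (Sum.inl i) 1) =
      Pi.single (Sum.inl (-i)) 1)
    (hyb : ρC (DihedralGroup.sr 0) (Pi.single (Sum.inr ()) 1) =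
      (∑ i : ZMod (2 * n), Pi.single (Sum.inl i) 1) - Pi.single (Sum.inr ()) 1) :
    ∃ e : (((ZMod (2 * n) ⊕ Unit) → ℤ) × ℤ) ≃ₗ[ℤ]
      (((DihedralGroup n ⧸
          Subgroup.zpowers (DihedralGroup.r 1 * DihedralGroup.sr 0)) →₀ ℤ) ×
        ((DihedralGroup n ⧸
          Subgroup.zpowers (DihedralGroup.r 1 ^ 2 * DihedralGroup.sr 0)) →₀ ℤ) ×
        ((DihedralGroup n ⧸ Subgroup.zpowers (DihedralGroup.r 1)) →₀ ℤ)),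
      ∀ (g : DihedralGroup n) (v : ((ZMod (2 * n) ⊕ Unit) → ℤ) × ℤ),
        e (ρC g v.1, v.2) =
          ((Representation.ofMulAction ℤ (DihedralGroup n)
            (DihedralGroup n ⧸
              Subgroup.zpowers (DihedralGroup.r 1 * DihedralGroup.sr 0)) g
              (MonoidAlgebra.ofCoeff (e v).1)).coeff,
           (Representation.ofMulAction ℤ (DihedralGroup n)
            (DihedralGroup n ⧸
              Subgroup.zpowers (DihedralGroup.r 1 ^ 2 * DihedralGroup.sr 0)) g
              (MonoidAlgebra.ofCoeff (e v).2.1)).coeff,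
           (Representation.ofMulAction ℤ (DihedralGroup n)
            (DihedralGroup n ⧸ Subgroup.zpowers (DihedralGroup.r 1)) g
              (MonoidAlgebra.ofCoeff (e v).2.2)).coeff) := by
  have : NeZero n := ⟨hodd.pos.ne'⟩
  obtain ⟨ψ, hsurj, hψ⟩ := exists_equivariant_surjection ρC hxa hya hxb hyb hodd
  have hbij := ψ.bijective_of_surjective_of_finrank_eq hsurj (by
    rw [finrank_finsupp_quotients]
    simp)
  set E := LinearEquiv.ofBijective ψ hbij
  have hE : ∀ v, ψ (E.symm v) = v := E.apply_symm_apply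
  refine ⟨E.symm, fun g v => hbij.1 ?_⟩
  simp only [Representation.coeff_ofMulAction_ofCoeff, hψ, hE]

/-- For `n ≥ 3` odd and `G = D_n`, the rank-`(2n+1)` `G`-lattice `C`
(basis `a_i (i mod 2n), b₁`, `x : a_i ↦ a_{i+2}`, `b₁ ↦ b₁`, `y : a_i ↦ a_{-i}`,
`b₁ ↦ Σ a_i - b₁`) satisfies
`C ⊕ ℤ ≅ ℤ[G/⟨xy⟩] ⊕ ℤ[G/⟨x²y⟩] ⊕ ℤ[G/⟨x⟩]`; in particular `C` is stably
permutation.  Here `x = r 1`, `y = sr 0`. -/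
theorem stmt_11 (n : ℕ) [NeZero (2 * n)] (hn : 3 ≤ n) (hodd : Odd n)
    (ρC : Representation ℤ (DihedralGroup n) ((ZMod (2 * n) ⊕ Unit) → ℤ))
    (hxa : ∀ i : ZMod (2 * n), ρC (DihedralGroup.r 1) (Pi.single (Sum.inl i) 1) =
      Pi.single (Sum.inl (i + 2)) 1)
    (hxb : ρC (DihedralGroup.r 1) (Pi.single (Sum.inr ()) 1) = Pi.single (Sum.inr ()) 1)
    (hya : ∀ i : ZMod (2 * n), ρC (DihedralGroup.sr 0) (Pi.single (Sum.inl i) 1) =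
      Pi.single (Sum.inl (-i)) 1)
    (hyb : ρC (DihedralGroup.sr 0) (Pi.single (Sum.inr ()) 1) =
      (∑ i : ZMod (2 * n), Pi.single (Sum.inl i) 1) - Pi.single (Sum.inr ()) 1) :
    ∃ e : (((ZMod (2 * n) ⊕ Unit) → ℤ) × ℤ) ≃ₗ[ℤ]
      (((DihedralGroup n ⧸
          Subgroup.zpowers (DihedralGroup.r 1 * DihedralGroup.sr 0)) →₀ ℤ) ×
        ((DihedralGroup n ⧸
          Subgroup.zpowers (DihedralGroup.r 1 ^ 2 * DihedralGroup.sr 0)) →₀ ℤ) ×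
        ((DihedralGroup n ⧸ Subgroup.zpowers (DihedralGroup.r 1)) →₀ ℤ)),
      ∀ (g : DihedralGroup n) (v : ((ZMod (2 * n) ⊕ Unit) → ℤ) × ℤ),
        e (ρC g v.1, v.2) =
          ((Representation.ofMulAction ℤ (DihedralGroup n)
            (DihedralGroup n ⧸
              Subgroup.zpowers (DihedralGroup.r 1 * DihedralGroup.sr 0)) g
              (MonoidAlgebra.ofCoeff (e v).1)).coeff,
           (Representation.ofMulAction ℤ (DihedralGroup n)
            (DihedralGroup n ⧸
              Subgroup.zpowers (DihedralGroup.r 1 ^ 2 * DihedralGroup.sr 0)) g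
              (MonoidAlgebra.ofCoeff (e v).2.1)).coeff,
           (Representation.ofMulAction ℤ (DihedralGroup n)
            (DihedralGroup n ⧸ Subgroup.zpowers (DihedralGroup.r 1)) g
              (MonoidAlgebra.ofCoeff (e v).2.2)).coeff) :=
  stmt_11_general n hodd ρC hxa hxb hya hyb
end

section
/- Let $n = 2m$ with $m \geq 3$ odd, $G = D_n$, $H = \langle xy \rangle$, and let $\varphi : P \to I_{G/H}$ be the $G$-homomorphism defined by $\varphi(\alpha_i) = f_i + f_{m+i}$, $\varphi(\beta_i) = -(f_i + f_{m+i})$ ($1 \leq i \leq m$), $\varphi(\gamma_j) = x^{j-1}(\sum_{l=1}^{m-1} f_l + f_{m+1})$ ($1 \leq j \leq n$). Then the following elements lie in the image of $\varphi$: (a) $\sum_{l=2}^{m-1} f_l = \varphi(\gamma_1) - \varphi(\alpha_1)$; (b) $f_m + f_{m+2} = -\varphi(\gamma_1) + \varphi(\alpha_1) + \varphi(\gamma_2)$; (c) $f_i + f_{i+2}$ for all $i$ (indices mod $n$); (d) $\sum_{l=i}^{i+3} f_l$ for all $i$; and consequently $f_1 \in \mathrm{Image}(\varphi)$ when $m \equiv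 1 \pmod 4$ and $f_2 \in \mathrm{Image}(\varphi)$ when $m \equiv 3 \pmod 4$, whence $\varphi$ is surjective. -/
/-!
The images `φ(γ_{j+1}) - φ(γ_j)` telescope, so together with one `φ(α)` they give every
`f_i + f_{i+2}`; pairs of these give every block `f_i + ⋯ + f_{i+3}`. Removing such blocks
from the odd-length sum `f_2 + ⋯ + f_{m-1} = φ(γ_1) - φ(α_1)` leaves a single `f_a` in the image.
Adding `f_i + f_{i+2}` moves it through one parity class of `ℤ/2m`, and since `m` is odd,
`φ(α) = f_a + f_{a+m}` carries it to the other class.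
-/

open Finset

section ConsecutiveSums

variable {R M : Type*} [CommRing R] [AddCommGroup M] {S : AddSubgroup M} {f : R → M}

theorem add_add_add_mem_of_add_mem (hpair : ∀ i, f i + f (i + 2) ∈ S) (i : R) :
    f i + f (i + 1) + f (i + 2) + f (i + 3) ∈ S := by
  have h := S.add_mem (hpair i) (hpair (i + 1))
  rw [show i + 1 + 2 = i + 3 by ring] at h
  convert h using 1
  abel

theorem add_two_mul_mem (hpair : ∀ i, f i + f (i + 2) ∈ S) {a : R} (ha : f a ∈ S) (k : ℕ) :
    f (a + 2 * k) ∈ S := by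
  induction k with
  | zero => simpa using ha
  | succ k ih =>
    have h := S.sub_mem (hpair (a + 2 * k)) ih
    rw [add_sub_cancel_left] at h
    convert h using 2
    push_cast
    ring

theorem sum_range_four_mul_mem (hpair : ∀ i, f i + f (i + 2) ∈ S) (j : R) (k : ℕ) :
    ∑ l ∈ range (4 * k), f (j + l) ∈ S := by
  induction k with
  | zero => simp
  | succ k ih =>
    rw [mul_add, mul_one, sum_range_add]
    refine S.add_mem ih ?_
    convert add_add_add_mem_of_add_mem hpair (j + 4 * k) using 1
    simp only [sum_range_succ, sum_range_zero, zero_add]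
    push_cast
    simp only [add_zero, add_assoc]

theorem exists_mem_of_sum_range_mem (hpair : ∀ i, f i + f (i + 2) ∈ S) {N : ℕ} (hN : Odd N)
    (j : R) (hsum : ∑ l ∈ range N, f (j + l) ∈ S) : ∃ a, f a ∈ S := by
  obtain ⟨k, r, hr, rfl⟩ : ∃ k r, (r = 1 ∨ r = 3) ∧ N = 4 * k + r :=
    ⟨N / 4, N % 4, by rcases hN with ⟨t, rfl⟩; omega, (Nat.div_add_mod N 4).symm⟩
  rw [sum_range_add] at hsum
  have hrest := (S.add_mem_cancel_left (sum_range_four_mul_mem hpair j k)).mp hsum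
  rcases hr with rfl | rfl <;> simp only [sum_range_succ, sum_range_zero, zero_add] at hrest <;>
    push_cast at hrest
  · exact ⟨_, by simpa using hrest⟩
  · refine ⟨j + 4 * k + 1, ?_⟩
    have h := S.sub_mem hrest (hpair (j + 4 * k))
    convert h using 1
    simp only [add_zero, add_assoc]
    abel

end ConsecutiveSums

theorem LinearMap.range_eq_span_range_single {R N ι : Type*} [CommRing R] [AddCommGroup N]
    [Module R N] [Finite ι] [DecidableEq ι] (φ : (ι → R) →ₗ[R] N) :
    LinearMap.range φ = Submodule.span R (Set.range fun i ↦ φ (Pi.single i 1)) := by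
  rw [LinearMap.range_eq_map, ← (Pi.basisFun R ι).span_eq, Submodule.map_span, ← Set.range_comp]
  simp [Function.comp_def]

theorem ZMod.natCast_self_add_self (m : ℕ) : (m : ZMod (2 * m)) + m = 0 := by
  rw [← Nat.cast_add, ← two_mul, ZMod.natCast_self]

theorem ZMod.exists_eq_two_mul_or_eq_add_two_mul {m : ℕ} (hodd : Odd m) (x : ZMod (2 * m)) :
    ∃ k : ℕ, x = 2 * k ∨ x = m + 2 * k := by
  have : NeZero (2 * m) := ⟨by rcases hodd with ⟨t, rfl⟩; omega⟩
  rw [← ZMod.natCast_zmod_val x]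
  rcases Nat.even_or_odd x.val with ⟨k, hk⟩ | ⟨k, hk⟩
  · exact ⟨k, Or.inl (by rw [hk]; push_cast; ring)⟩
  · obtain ⟨t, ht⟩ := hodd
    have hmt : (m : ZMod (2 * m)) = 2 * t + 1 := by
      simpa using congrArg (Nat.cast : ℕ → ZMod (2 * m)) ht
    refine ⟨k + t + 1, Or.inr ?_⟩
    rw [hk]
    push_cast
    linear_combination hmt - ZMod.natCast_self_add_self m

section DihedralLattice

variable {M : Type*} [AddCommGroup M] {m : ℕ} (f : ZMod (2 * m) → M)

/-- The paper's `φ(α_i) = f_i + f_{m+i}`, extended to every `i : ZMod (2 * m)`, where it is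
`m`-periodic. -/
def alphaImage (x : ZMod (2 * m)) : M := f x + f (m + x)

/-- The paper's `φ(γ_j) = x^{j-1}(f_1 + ⋯ + f_{m-1} + f_{m+1})`. -/
def gammaImage (j : ZMod (2 * m)) : M := ∑ l ∈ range (m - 1), f (j + l) + f (j + m)

theorem alphaImage_add_natCast_mul (x : ZMod (2 * m)) (q : ℕ) :
    alphaImage f (x + m * q) = alphaImage f x := by
  induction q with
  | zero => simp
  | succ q ih =>
    rw [← ih, alphaImage, alphaImage]
    conv_rhs => rw [add_comm]
    push_cast
    congr 2
    · ring
    · linear_combination ZMod.natCast_self_add_self m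

theorem alphaImage_natCast_val_natCast_val [NeZero m] (x : ZMod (2 * m)) :
    alphaImage f (((x.val : ZMod m).val : ℕ) : ZMod (2 * m)) = alphaImage f x := by
  conv_rhs => rw [← ZMod.natCast_zmod_val x, ← Nat.mod_add_div x.val m]
  rw [ZMod.val_natCast]
  push_cast
  exact (alphaImage_add_natCast_mul f _ _).symm

theorem gammaImage_add_one_sub_add_alphaImage (hm : 1 ≤ m) (j : ZMod (2 * m)) :
    gammaImage f (j + 1) - gammaImage f j + alphaImage f j = f (j + m - 1) + f (j + m + 1) := by
  have htele : ∑ l ∈ range (m - 1), f (j + 1 + l) - ∑ l ∈ range (m - 1), f (j + l) =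
      f (j + m - 1) - f j := by
    rw [← sum_sub_distrib]
    convert sum_range_sub (fun l : ℕ ↦ f (j + l)) (m - 1) using 1
    · refine sum_congr rfl fun l _ ↦ ?_
      push_cast
      ring_nf
    · rw [Nat.cast_sub hm]
      simp [add_sub_assoc]
  rw [sub_eq_iff_eq_add] at htele
  rw [gammaImage, gammaImage, alphaImage, htele, add_right_comm j 1, add_comm (m : ZMod (2 * m)) j]
  abel

theorem sum_Icc_two_eq_gammaImage_sub_alphaImage (hm : 2 ≤ m) :
    ∑ l ∈ Icc 2 (m - 1), f l = gammaImage f 1 - alphaImage f 1 := by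
  have hsplit := sum_eq_sum_Ico_succ_bot (by omega : 1 < m) (fun l : ℕ ↦ f l)
  rw [sum_Ico_eq_sum_range] at hsplit
  push_cast at hsplit
  rw [← Ico_add_one_right_eq_Icc, Nat.sub_add_cancel (by omega : 1 ≤ m), gammaImage, alphaImage,
    hsplit, add_comm (1 : ZMod (2 * m))]
  abel

theorem add_add_two_eq_gammaImage_sub_add_alphaImage (hm : 1 ≤ m) (i : ZMod (2 * m)) :
    f i + f (i + 2) =
      gammaImage f (i + m + 2) - gammaImage f (i + m + 1) + alphaImage f (i + m + 1) := by
  rw [show i + m + 2 = i + m + 1 + 1 by ring, gammaImage_add_one_sub_add_alphaImage f hm]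
  congr 2 <;> linear_combination -ZMod.natCast_self_add_self m

theorem apply_natCast_add_apply_natCast_add_two (hm : 1 ≤ m) :
    f m + f (m + 2) = gammaImage f 2 - gammaImage f 1 + alphaImage f 1 := by
  have h := gammaImage_add_one_sub_add_alphaImage f hm 1
  rw [one_add_one_eq_two] at h
  rw [h]
  congr 2 <;> ring

variable {f}

theorem forall_mem_of_mem {S : AddSubgroup M} (hodd : Odd m) (hpair : ∀ i, f i + f (i + 2) ∈ S)
    (halpha : ∀ x, alphaImage f x ∈ S) {a : ZMod (2 * m)} (ha : f a ∈ S) (i : ZMod (2 * m)) :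
    f i ∈ S := by
  have ha' : f (a + m) ∈ S := by
    have h := S.sub_mem (halpha a) ha
    rwa [alphaImage, add_sub_cancel_left, add_comm] at h
  obtain ⟨k, hk | hk⟩ := ZMod.exists_eq_two_mul_or_eq_add_two_mul hodd (i - a)
  · simpa [← hk] using add_two_mul_mem hpair ha k
  · simpa [add_assoc, ← hk] using add_two_mul_mem hpair ha' k

theorem forall_mem_of_sum_Icc_two_mem {S : AddSubgroup M} (hm : 3 ≤ m) (hodd : Odd m)
    (hpair : ∀ i, f i + f (i + 2) ∈ S) (halpha : ∀ x, alphaImage f x ∈ S)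
    (hsum : ∑ l ∈ Icc 2 (m - 1), f l ∈ S) (i : ZMod (2 * m)) : f i ∈ S := by
  rw [← Ico_add_one_right_eq_Icc, Nat.sub_add_cancel (by omega), sum_Ico_eq_sum_range] at hsum
  push_cast at hsum
  have hlen : Odd (m - 2) := by
    obtain ⟨t, rfl⟩ := hodd
    exact ⟨t - 1, by omega⟩
  obtain ⟨a, ha⟩ := exists_mem_of_sum_range_mem hpair hlen 2 hsum
  exact forall_mem_of_mem hodd hpair halpha ha i

end DihedralLattice

theorem stmt_18_general (m : ℕ) (hm : 3 ≤ m) (hodd : Odd m)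
    (f : ZMod (2 * m) → (ZMod (2 * m) → ℤ))
    (φ : ((ZMod m ⊕ ZMod m ⊕ ZMod (2 * m)) → ℤ) →ₗ[ℤ] (ZMod (2 * m) → ℤ))
    (hφa : ∀ i : ZMod m, φ (Pi.single (Sum.inl i) 1) =
      f (i.val : ZMod (2 * m)) + f ((m : ZMod (2 * m)) + (i.val : ZMod (2 * m))))
    (hφb : ∀ i : ZMod m, φ (Pi.single (Sum.inr (Sum.inl i)) 1) =
      -(f (i.val : ZMod (2 * m)) + f ((m : ZMod (2 * m)) + (i.val : ZMod (2 * m)))))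
    (hφc : ∀ j : ZMod (2 * m), φ (Pi.single (Sum.inr (Sum.inr j)) 1) =
      (∑ l ∈ Finset.range (m - 1), f (j + (l : ZMod (2 * m)))) + f (j + (m : ZMod (2 * m)))) :
    (∑ l ∈ Finset.Icc 2 (m - 1), f (l : ZMod (2 * m)) =
      φ (Pi.single (Sum.inr (Sum.inr (1 : ZMod (2 * m)))) 1)
        - φ (Pi.single (Sum.inl (1 : ZMod m)) 1)) ∧
    (f (m : ZMod (2 * m)) + f ((m : ZMod (2 * m)) + 2) =
      -φ (Pi.single (Sum.inr (Sum.inr (1 : ZMod (2 * m)))) 1)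
        + φ (Pi.single (Sum.inl (1 : ZMod m)) 1)
        + φ (Pi.single (Sum.inr (Sum.inr (2 : ZMod (2 * m)))) 1)) ∧
    (∀ i : ZMod (2 * m), f i + f (i + 2) ∈ LinearMap.range φ) ∧
    (∀ i : ZMod (2 * m), f i + f (i + 1) + f (i + 2) + f (i + 3) ∈ LinearMap.range φ) ∧
    (m % 4 = 1 → f 1 ∈ LinearMap.range φ) ∧
    (m % 4 = 3 → f 2 ∈ LinearMap.range φ) ∧
    LinearMap.range φ = Submodule.span ℤ (Set.range f) := by
  have : NeZero m := ⟨by omega⟩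
  have hgamma : ∀ j, φ (Pi.single (Sum.inr (Sum.inr j)) 1) = gammaImage f j := hφc
  have halpha : ∀ x, alphaImage f x ∈ LinearMap.range φ := fun x ↦
    ⟨_, (hφa _).trans (alphaImage_natCast_val_natCast_val f x)⟩
  have halpha_one : φ (Pi.single (Sum.inl 1) 1) = alphaImage f 1 := by
    have : Fact (1 < m) := ⟨by omega⟩
    rw [hφa, ZMod.val_one, Nat.cast_one]
    rfl
  have hpair : ∀ i, f i + f (i + 2) ∈ LinearMap.range φ := fun i ↦ by
    rw [add_add_two_eq_gammaImage_sub_add_alphaImage f (by omega)]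
    exact add_mem (sub_mem ⟨_, hgamma _⟩ ⟨_, hgamma _⟩) (halpha _)
  have hpartA : ∑ l ∈ Icc 2 (m - 1), f l = φ (Pi.single (Sum.inr (Sum.inr 1)) 1)
      - φ (Pi.single (Sum.inl 1) 1) := by
    rw [sum_Icc_two_eq_gammaImage_sub_alphaImage f (by omega), hgamma, halpha_one]
  have hall : ∀ i, f i ∈ LinearMap.range φ :=
    forall_mem_of_sum_Icc_two_mem (S := (LinearMap.range φ).toAddSubgroup) hm hodd hpair halpha
      (hpartA ▸ sub_mem ⟨_, rfl⟩ ⟨_, rfl⟩)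
  have hrange : LinearMap.range φ ≤ Submodule.span ℤ (Set.range f) := by
    have hf : ∀ i, f i ∈ Submodule.span ℤ (Set.range f) := fun i ↦ Submodule.subset_span ⟨i, rfl⟩
    rw [LinearMap.range_eq_span_range_single, Submodule.span_le, Set.range_subset_iff]
    rintro (i | i | j)
    · exact (hφa i).symm ▸ add_mem (hf _) (hf _)
    · exact (hφb i).symm ▸ neg_mem (add_mem (hf _) (hf _))
    · exact (hφc j).symm ▸ add_mem (sum_mem fun _ _ ↦ hf _) (hf _)
  refine ⟨hpartA, ?_, hpair, add_add_add_mem_of_add_mem (S := (LinearMap.range φ).toAddSubgroup)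
    hpair, fun _ ↦ hall 1, fun _ ↦ hall 2, le_antisymm hrange (Submodule.span_le.mpr ?_)⟩
  · rw [apply_natCast_add_apply_natCast_add_two f (by omega), hgamma, hgamma, halpha_one]
    abel
  · rintro _ ⟨i, rfl⟩
    exact hall i

/-- For `n = 2m`, `m ≥ 3` odd, `G = D_n`, `H = ⟨xy⟩`, and the `G`-homomorphism
`φ : P → I_{G/H}` of the main construction: the elements
`Σ_{l=2}^{m-1} f_l = φ(γ₁) - φ(α₁)`,
`f_m + f_{m+2} = -φ(γ₁) + φ(α₁) + φ(γ₂)`, all `f_i + f_{i+2}`, all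
`Σ_{l=i}^{i+3} f_l` lie in the image of `φ`; consequently `f₁ ∈ Image(φ)` when
`m ≡ 1 (mod 4)` and `f₂ ∈ Image(φ)` when `m ≡ 3 (mod 4)`, whence `φ` is surjective
onto the augmentation sublattice. -/
theorem stmt_18 (m : ℕ) (hm : 3 ≤ m) (hodd : Odd m)
    (f : ZMod (2 * m) → (ZMod (2 * m) → ℤ))
    (hf : ∀ i, f i = Pi.single i 1 - Pi.single (i + 1) 1)
    (φ : ((ZMod m ⊕ ZMod m ⊕ ZMod (2 * m)) → ℤ) →ₗ[ℤ] (ZMod (2 * m) → ℤ))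
    (hφa : ∀ i : ZMod m, φ (Pi.single (Sum.inl i) 1) =
      f (i.val : ZMod (2 * m)) + f ((m : ZMod (2 * m)) + (i.val : ZMod (2 * m))))
    (hφb : ∀ i : ZMod m, φ (Pi.single (Sum.inr (Sum.inl i)) 1) =
      -(f (i.val : ZMod (2 * m)) + f ((m : ZMod (2 * m)) + (i.val : ZMod (2 * m)))))
    (hφc : ∀ j : ZMod (2 * m), φ (Pi.single (Sum.inr (Sum.inr j)) 1) =
      (∑ l ∈ Finset.range (m - 1), f (j + (l : ZMod (2 * m)))) + f (j + (m : ZMod (2 * m)))) :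
    (∑ l ∈ Finset.Icc 2 (m - 1), f (l : ZMod (2 * m)) =
      φ (Pi.single (Sum.inr (Sum.inr (1 : ZMod (2 * m)))) 1)
        - φ (Pi.single (Sum.inl (1 : ZMod m)) 1)) ∧
    (f (m : ZMod (2 * m)) + f ((m : ZMod (2 * m)) + 2) =
      -φ (Pi.single (Sum.inr (Sum.inr (1 : ZMod (2 * m)))) 1)
        + φ (Pi.single (Sum.inl (1 : ZMod m)) 1)
        + φ (Pi.single (Sum.inr (Sum.inr (2 : ZMod (2 * m)))) 1)) ∧
    (∀ i : ZMod (2 * m), f i + f (i + 2) ∈ LinearMap.range φ) ∧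
    (∀ i : ZMod (2 * m), f i + f (i + 1) + f (i + 2) + f (i + 3) ∈ LinearMap.range φ) ∧
    (m % 4 = 1 → f 1 ∈ LinearMap.range φ) ∧
    (m % 4 = 3 → f 2 ∈ LinearMap.range φ) ∧
    LinearMap.range φ = Submodule.span ℤ (Set.range f) :=
  stmt_18_general m hm hodd f φ hφa hφb hφc
end
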